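/- arXiv:2111.07474 — 12 statements merged into one kernel-verified Lean document; each statement's English description precedes it below -/
import Mathlib

section
/- Let U be a finite set, P = (P_1,…,P_r) a partition of U, h a function from the hypergrid [0,|P_1|] × ⋯ × [0,|P_r|] (integer points) to ℤ, and define f_P(S) = h(|S ∩ P_1|, …, |S ∩ P_r|) for S ⊆ U. Then f_P is a submodular set function (i.e., f_P(A ∪ {e'}) − f_P(A) ≥ f_P(A ∪ {e, e'}) − f_P(A ∪ {e}) for every A ⊆ U and every pair of distinct elements e, e' ∉ A) if and only if h is hypergrid submodular (i.e., h(x + e_j) − h(x) ≥ h(x + e_i + e_j) − h(x + e_i) for all coordinates i, j and all x such that all four points lie in the hypergrid, where e_i denotes the i-th standard unit vector). -/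
/-- The `i`-th standard unit vector in `Fin r → ℤ`. -/
def eVecF {r : ℕ} (i : Fin r) : Fin r → ℤ := fun k => if k = i then 1 else 0

private lemma insert_inter_card {α : Type*} [DecidableEq α] {r : ℕ}
    (P : Fin r → Finset α)
    (hdisj : ∀ i j : Fin r, i ≠ j → Disjoint (P i) (P j))
    (A : Finset α) (a : α) (i : Fin r) (ha : a ∈ P i) (haA : a ∉ A) (k : Fin r) :
    ((insert a A ∩ P k).card : ℤ) = ((A ∩ P k).card : ℤ) + (if k = i then 1 else 0) := by
  by_cases hk : k = i
  · subst hk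
    rw [Finset.insert_inter_of_mem ha,
      Finset.card_insert_of_notMem (fun hmem => haA (Finset.mem_inter.mp hmem).1)]
    simp
  · have hak : a ∉ P k := Finset.disjoint_left.mp (hdisj i k (fun hh => hk hh.symm)) ha
    rw [Finset.insert_inter_of_notMem hak]
    simp [hk]

/-- Let `P = (P 0, …, P (r-1))` be a partition of a finite set,
`h` a function on the integer hypergrid `[0,|P 0|] × ⋯ × [0,|P (r-1)|]`, and
`f S = h (|S ∩ P 0|, …, |S ∩ P (r-1)|)`.  Then `f` is a submodular set function iff
`h` is hypergrid submodular. -/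
theorem partition_submodular_iff_hypergrid_submodular
    {α : Type*} [Fintype α] [DecidableEq α] {r : ℕ}
    (P : Fin r → Finset α)
    (hdisj : ∀ i j : Fin r, i ≠ j → Disjoint (P i) (P j))
    (hcover : ∀ a : α, ∃ i : Fin r, a ∈ P i)
    (h : (Fin r → ℤ) → ℤ)
    (f : Finset α → ℤ)
    (hf : ∀ S : Finset α, f S = h (fun i => ((S ∩ P i).card : ℤ))) :
    (∀ A : Finset α, ∀ e e' : α, e ∉ A → e' ∉ A → e ≠ e' →
        f (insert e' A) - f A ≥ f (insert e (insert e' A)) - f (insert e A))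
      ↔
    (∀ i j : Fin r, ∀ x : Fin r → ℤ,
        (∀ k : Fin r,
            0 ≤ x k ∧
            x k + (if k = i then 1 else 0) + (if k = j then 1 else 0) ≤ ((P k).card : ℤ)) →
        h (x + eVecF j) - h x ≥ h (x + eVecF i + eVecF j) - h (x + eVecF i)) := by
  constructor
  · -- set submodular → hypergrid submodular
    intro hsub i j x hx
    have hx0 : ∀ k, 0 ≤ x k := fun k => (hx k).1
    set n : Fin r → ℕ := fun k => (x k).toNat with hn
    have hxn : ∀ k, (n k : ℤ) = x k := fun k => Int.toNat_of_nonneg (hx0 k)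
    have hle : ∀ k, n k ≤ (P k).card := by
      intro k
      have h2 := (hx k).2
      have h1 : x k ≤ ((P k).card : ℤ) := by
        have : (0:ℤ) ≤ (if k = i then 1 else 0) + (if k = j then 1 else 0) := by
          split_ifs <;> norm_num
        linarith
      rw [← hxn k] at h1
      exact_mod_cast h1
    have hS : ∀ k, ∃ S ⊆ P k, S.card = n k := fun k => Finset.exists_subset_card_eq (hle k)
    choose S hS1 hS2 using hS
    set A := Finset.univ.biUnion S with hA
    have hAP : ∀ k, A ∩ P k = S k := by
      intro k
      apply Finset.Subset.antisymm
      · intro a ha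
        rw [Finset.mem_inter] at ha
        obtain ⟨haA, haP⟩ := ha
        rw [Finset.mem_biUnion] at haA
        obtain ⟨l, _, hal⟩ := haA
        rcases eq_or_ne l k with rfl | hlk
        · exact hal
        · exact absurd haP (Finset.disjoint_left.mp (hdisj l k hlk) (hS1 l hal))
      · intro a ha
        exact Finset.mem_inter.mpr ⟨Finset.mem_biUnion.mpr ⟨k, Finset.mem_univ k, ha⟩, hS1 k ha⟩
    have hnotA : ∀ (m : Fin r) (a : α), a ∈ P m → a ∉ S m → a ∉ A := by
      intro m a haP haS haA
      rw [Finset.mem_biUnion] at haA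
      obtain ⟨l, _, hal⟩ := haA
      rcases eq_or_ne l m with rfl | hlm
      · exact haS hal
      · exact Finset.disjoint_left.mp (hdisj l m hlm) (hS1 l hal) haP
    have hroom : ∀ k, (P k \ S k).card = (P k).card - n k := by
      intro k; rw [Finset.card_sdiff_of_subset (hS1 k), hS2 k]
    -- pick e ∈ P i \ S i and e' ∈ P j \ S j with e ≠ e'
    have hex : ∃ e ∈ P i \ S i, ∃ e' ∈ P j \ S j, e ≠ e' := by
      rcases eq_or_ne i j with rfl | hij
      · have h2 := (hx i).2
        simp only [if_pos rfl, if_true] at h2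
        have h2' : (n i : ℤ) + 2 ≤ ((P i).card : ℤ) := by rw [hxn]; linarith
        have h2n : n i + 2 ≤ (P i).card := by exact_mod_cast h2'
        have hlt : 1 < (P i \ S i).card := by rw [hroom]; omega
        obtain ⟨e, he, e', he', hne⟩ := Finset.one_lt_card.mp hlt
        exact ⟨e, he, e', he', hne⟩
      · have h2i := (hx i).2
        have h2j := (hx j).2
        simp only [if_pos rfl, if_true, if_neg hij, if_neg (Ne.symm hij)] at h2i h2j
        have h2i' : n i + 1 ≤ (P i).card := by
          have : (n i : ℤ) + 1 ≤ ((P i).card : ℤ) := by rw [hxn]; linarith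
          exact_mod_cast this
        have h2j' : n j + 1 ≤ (P j).card := by
          have : (n j : ℤ) + 1 ≤ ((P j).card : ℤ) := by rw [hxn]; linarith
          exact_mod_cast this
        have hi : 0 < (P i \ S i).card := by rw [hroom]; omega
        have hj : 0 < (P j \ S j).card := by rw [hroom]; omega
        obtain ⟨e, he⟩ := Finset.card_pos.mp hi
        obtain ⟨e', he'⟩ := Finset.card_pos.mp hj
        refine ⟨e, he, e', he', ?_⟩
        intro hee
        subst hee
        exact Finset.disjoint_left.mp (hdisj i j hij) (Finset.mem_sdiff.mp he).1
          (Finset.mem_sdiff.mp he').1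
    obtain ⟨e, he, e', he', hne⟩ := hex
    obtain ⟨heP, heS⟩ := Finset.mem_sdiff.mp he
    obtain ⟨he'P, he'S⟩ := Finset.mem_sdiff.mp he'
    have heA : e ∉ A := hnotA i e heP heS
    have he'A : e' ∉ A := hnotA j e' he'P he'S
    have he'A2 : e ∉ insert e' A := by
      simp only [Finset.mem_insert]
      rintro (rfl | hc)
      · exact hne rfl
      · exact heA hc
    have hcardA : ∀ k, ((A ∩ P k).card : ℤ) = x k := by
      intro k; rw [hAP k, hS2 k, hxn k]
    have hA0 : (fun k => ((A ∩ P k).card : ℤ)) = x := funext hcardA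
    have hA1 : (fun k => ((insert e' A ∩ P k).card : ℤ)) = x + eVecF j := by
      funext k
      rw [insert_inter_card P hdisj A e' j he'P he'A k, hcardA k]
      simp [eVecF]
    have hA2 : (fun k => ((insert e A ∩ P k).card : ℤ)) = x + eVecF i := by
      funext k
      rw [insert_inter_card P hdisj A e i heP heA k, hcardA k]
      simp [eVecF]
    have hA3 : (fun k => ((insert e (insert e' A) ∩ P k).card : ℤ)) = x + eVecF i + eVecF j := by
      funext k
      rw [insert_inter_card P hdisj (insert e' A) e i heP he'A2 k,
        insert_inter_card P hdisj A e' j he'P he'A k, hcardA k]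
      simp [eVecF]
      ring
    have hkey := hsub A e e' heA he'A hne
    rwa [hf, hf, hf, hf, hA0, hA1, hA2, hA3] at hkey
  · -- hypergrid submodular → set submodular
    intro hgrid A e e' heA he'A hne
    obtain ⟨i, hi⟩ := hcover e
    obtain ⟨j, hj⟩ := hcover e'
    set x : Fin r → ℤ := fun k => ((A ∩ P k).card : ℤ) with hxdef
    have heA' : e ∉ insert e' A := by
      simp only [Finset.mem_insert]
      rintro (rfl | hc)
      · exact hne rfl
      · exact heA hc
    have h1 : (fun k => ((insert e' A ∩ P k).card : ℤ)) = x + eVecF j := by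
      funext k
      rw [insert_inter_card P hdisj A e' j hj he'A k]
      simp [eVecF, hxdef]
    have h2 : (fun k => ((insert e A ∩ P k).card : ℤ)) = x + eVecF i := by
      funext k
      rw [insert_inter_card P hdisj A e i hi heA k]
      simp [eVecF, hxdef]
    have h3 : (fun k => ((insert e (insert e' A) ∩ P k).card : ℤ)) = x + eVecF i + eVecF j := by
      funext k
      rw [insert_inter_card P hdisj (insert e' A) e i hi heA' k,
        insert_inter_card P hdisj A e' j hj he'A k]
      simp [eVecF, hxdef]
      ring
    have hb : ∀ k, 0 ≤ x k ∧
        x k + (if k = i then 1 else 0) + (if k = j then 1 else 0) ≤ ((P k).card : ℤ) := by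
      intro k
      refine ⟨by simp [hxdef], ?_⟩
      have hcard : ((insert e (insert e' A) ∩ P k).card : ℤ) ≤ ((P k).card : ℤ) := by
        exact_mod_cast Finset.card_le_card Finset.inter_subset_right
      have heq := congrFun h3 k
      simp only [Pi.add_apply, eVecF] at heq
      linarith [heq ▸ hcard]
    have hkey := hgrid i j x hb
    rw [hf (insert e' A), hf A, hf (insert e (insert e' A)), hf (insert e A), h1, h2, h3,
      ← hxdef]
    exact hkey
end

section
/- Let U be a finite set, P = (P_1,…,P_r) a partition of U, h a hypergrid submodular function on [0,|P_1|] × ⋯ × [0,|P_r|], and f_P(S) = h(|S ∩ P_1|, …, |S ∩ P_r|) the induced partition submodular set function. Let O be a minimizer of f_P over all subsets of U that is maximal by inclusion among all minimizers. Then for every i with 1 ≤ i ≤ r, if O ∩ P_i ≠ ∅ then P_i ⊆ O. -/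
/-- If `h` is hypergrid submodular, `f` is the induced partition
submodular set function, and `O` is a minimizer of `f` maximal by inclusion among all
minimizers, then every part `P i` meeting `O` is entirely contained in `O`. -/
theorem maximal_minimizer_all_or_nothing
    {α : Type*} [Fintype α] [DecidableEq α] {r : ℕ}
    (P : Fin r → Finset α)
    (hdisj : ∀ i j : Fin r, i ≠ j → Disjoint (P i) (P j))
    (hcover : ∀ a : α, ∃ i : Fin r, a ∈ P i)
    (h : (Fin r → ℤ) → ℤ)
    (hsub : ∀ i j : Fin r, ∀ x : Fin r → ℤ,
        (∀ k : Fin r,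
            0 ≤ x k ∧
            x k + (if k = i then 1 else 0) + (if k = j then 1 else 0) ≤ ((P k).card : ℤ)) →
        h (x + eVecF j) - h x ≥ h (x + eVecF i + eVecF j) - h (x + eVecF i))
    (f : Finset α → ℤ)
    (hf : ∀ S : Finset α, f S = h (fun i => ((S ∩ P i).card : ℤ)))
    (O : Finset α)
    (hmin : ∀ S : Finset α, f O ≤ f S)
    (hmaximal : ∀ S : Finset α, (∀ T : Finset α, f S ≤ f T) → O ⊆ S → S = O)
    (i : Fin r) (hne : (O ∩ P i).Nonempty) :
    P i ⊆ O := by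
  by_contra hns
  obtain ⟨a, haP, haO⟩ := Finset.not_subset.mp hns
  obtain ⟨b, hb⟩ := hne
  have hbO : b ∈ O := (Finset.mem_inter.mp hb).1
  have hbP : b ∈ P i := (Finset.mem_inter.mp hb).2
  set x : Fin r → ℤ := fun k => ((O ∩ P k).card : ℤ) with hx
  -- profile of O.erase b
  have herase : ∀ k, (((O.erase b) ∩ P k).card : ℤ) = x k - eVecF i k := by
    intro k
    by_cases hk : k = i
    · subst hk
      have : (O.erase b) ∩ P k = (O ∩ P k).erase b := by
        ext c; simp only [Finset.mem_inter, Finset.mem_erase]; tauto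
      rw [this, Finset.card_erase_of_mem hb]
      have hpos : 0 < (O ∩ P k).card := Finset.card_pos.mpr ⟨b, hb⟩
      simp [eVecF, hx]
      omega
    · have hbPk : b ∉ P k := fun hmem =>
        (Finset.disjoint_left.mp (hdisj i k (Ne.symm hk)) hbP) hmem
      have : (O.erase b) ∩ P k = O ∩ P k := by
        ext c; simp only [Finset.mem_inter, Finset.mem_erase]
        constructor
        · rintro ⟨⟨_, hc⟩, hc2⟩; exact ⟨hc, hc2⟩
        · rintro ⟨hc, hc2⟩; exact ⟨⟨fun hcb => hbPk (hcb ▸ hc2), hc⟩, hc2⟩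
      rw [this]
      simp [eVecF, hk, hx]
  -- profile of insert a O
  have hinsert : ∀ k, (((insert a O) ∩ P k).card : ℤ) = x k + eVecF i k := by
    intro k
    by_cases hk : k = i
    · subst hk
      have : (insert a O) ∩ P k = insert a (O ∩ P k) := by
        ext c
        simp only [Finset.mem_inter, Finset.mem_insert]
        constructor
        · rintro ⟨hc1 | hc1, hc2⟩
          · exact Or.inl hc1
          · exact Or.inr ⟨hc1, hc2⟩
        · rintro (rfl | ⟨hc1, hc2⟩)
          · exact ⟨Or.inl rfl, haP⟩
          · exact ⟨Or.inr hc1, hc2⟩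
      rw [this, Finset.card_insert_of_notMem (fun hmem => haO (Finset.mem_inter.mp hmem).1)]
      simp [eVecF, hx]
    · have haPk : a ∉ P k := fun hmem =>
        (Finset.disjoint_left.mp (hdisj i k (Ne.symm hk)) haP) hmem
      have : (insert a O) ∩ P k = O ∩ P k := by
        ext c; simp only [Finset.mem_inter, Finset.mem_insert]
        constructor
        · rintro ⟨rfl | hc1, hc2⟩
          · exact absurd hc2 haPk
          · exact ⟨hc1, hc2⟩
        · rintro ⟨hc1, hc2⟩; exact ⟨Or.inr hc1, hc2⟩
      rw [this]; simp [eVecF, hk, hx]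
  have hxi : 1 ≤ x i := by
    have hpos : 0 < (O ∩ P i).card := Finset.card_pos.mpr ⟨b, hb⟩
    show (1:ℤ) ≤ ((O ∩ P i).card : ℤ)
    exact_mod_cast hpos
  have hxicard : x i < ((P i).card : ℤ) := by
    have : O ∩ P i ⊂ P i :=
      ⟨Finset.inter_subset_right, fun hsub' =>
        haO (Finset.mem_inter.mp (hsub' haP)).1⟩
    have h2 := Finset.card_lt_card this
    show ((O ∩ P i).card : ℤ) < ((P i).card : ℤ)
    exact_mod_cast h2
  have hbound : ∀ k : Fin r,
      0 ≤ (fun k => x k - eVecF i k) k ∧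
      (fun k => x k - eVecF i k) k + (if k = i then 1 else 0) + (if k = i then 1 else 0)
        ≤ ((P k).card : ℤ) := by
    intro k
    by_cases hk : k = i
    · subst hk; simp [eVecF]; omega
    · have h1 : 0 ≤ x k := Int.natCast_nonneg _
      have h2 : x k ≤ ((P k).card : ℤ) := by
        show ((O ∩ P k).card : ℤ) ≤ ((P k).card : ℤ)
        exact_mod_cast Finset.card_le_card Finset.inter_subset_right
      simp [eVecF, hk]; omega
  have key := hsub i i (fun k => x k - eVecF i k) hbound
  have e1 : (fun k => x k - eVecF i k) + eVecF i = x := by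
    funext k; simp [Pi.add_apply]
  rw [e1] at key
  -- key : h (x) - h (x - e_i) ≥ h (x + e_i) - h x  (after rewrite)
  have hOerase : f (O.erase b) = h (fun k => x k - eVecF i k) := by
    rw [hf]; congr 1; funext k; exact herase k
  have hOinsert : f (insert a O) = h (x + eVecF i) := by
    rw [hf]; congr 1; funext k
    rw [Pi.add_apply]; exact hinsert k
  have hO : f O = h x := by rw [hf]
  have hle : f (insert a O) ≤ f O := by
    have h1 : f O ≤ f (O.erase b) := hmin _
    rw [hO, hOerase] at h1
    rw [hOinsert, hO]
    omega
  have hminS : ∀ T : Finset α, f (insert a O) ≤ f T :=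
    fun T => le_trans hle (hmin T)
  have := hmaximal (insert a O) hminS (Finset.subset_insert a O)
  exact haO (this ▸ Finset.mem_insert_self a O)
end

section
/- Let x ∈ D with x_i < n for some coordinate i, and let y = x + e_i. Let a be the odd index t ∈ {1,…,r} with the largest ℓ_t(x), breaking ties towards smaller indices (i.e., a is odd, ℓ_a(x) ≥ ℓ_t(x) for every odd t, and ℓ_a(x) > ℓ_t(x) for every odd t < a), and let a' be defined analogously with respect to y. If a' ≠ a, then (i) a' ≤ i < a, and (ii) ℓ_{a'}(y) = ℓ_a(y). The analogous statement holds when a and a' are instead the even indices t with the largest ℓ_t(x) and ℓ_t(y) respectively, ties broken towards smaller indices. -/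
/-- Suffix function `ℓ_t(x) = Σ_{s=t}^r (x_s − (n/2 − g)) − gr/4`. -/
def ellF (n g r : ℕ) (x : ℕ → ℤ) (t : ℕ) : ℤ :=
  (∑ s ∈ Finset.Icc t r, (x s - ((n : ℤ) / 2 - (g : ℤ)))) - ((g : ℤ) * (r : ℤ)) / 4

/-- The function `h(x) = Σ_i x_i − max(0, max_{odd t} ℓ_t(x)) − max(0, max_{even t} ℓ_t(x))`. -/
def hF (n g r : ℕ) (x : ℕ → ℤ) : ℤ :=
  (∑ j ∈ Finset.Icc 1 r, x j)
    - ((Finset.Icc 1 r).filter (fun t => Odd t)).fold max 0 (ellF n g r x)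
    - ((Finset.Icc 1 r).filter (fun t => Even t)).fold max 0 (ellF n g r x)

/-- Membership in the hypergrid `D = {0,…,n}^r` (coordinates `1,…,r`). -/
def inD (n r : ℕ) (x : ℕ → ℤ) : Prop :=
  ∀ j ∈ Finset.Icc 1 r, 0 ≤ x j ∧ x j ≤ (n : ℤ)

/-- The `i`-th standard unit vector. -/
def eVec (i : ℕ) : ℕ → ℤ := fun j => if j = i then 1 else 0

/-- Truncation `x̄ = (x_1,…,x_{r−1}, min(x_r, n/2 − g/4))`. -/
def truncF (n g r : ℕ) (x : ℕ → ℤ) : ℕ → ℤ :=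
  fun j => if j = r then min (x r) ((n : ℤ) / 2 - (g : ℤ) / 4) else x j

/-- The function `h*`. -/
def hStarF (n g r : ℕ) (x : ℕ → ℤ) : ℤ :=
  if x r ≤ (n : ℤ) / 2 - (g : ℤ) / 4 then hF n g r x
  else hF n g r (truncF n g r x) - (x r - ((n : ℤ) / 2 - (g : ℤ) / 4))

/-- `x` is `i`-balanced: `x_i − g/8 ≤ x_j ≤ x_i + g/8` for all `i < j ≤ r`
(stated multiplied through by `8`). -/
def iBal (g r i : ℕ) (x : ℕ → ℤ) : Prop :=
  ∀ j : ℕ, i < j → j ≤ r → 8 * (x i - x j) ≤ (g : ℤ) ∧ 8 * (x j - x i) ≤ (g : ℤ)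

/-- Moving from `x` to `y = x + e_i`, the odd (resp. even) argmax of the
suffix functions can only move left, and if it moves then the two suffix values agree at `y`.
The predicate `p` is either `Odd` or `Even`. -/
theorem argmax_moves_left
    (n g r : ℕ) (hn : 0 < n) (hn2 : 2 ∣ n) (hg : 0 < g) (hg4 : 4 ∣ g)
    (hr : 3 ≤ r) (hrodd : Odd r)
    (x : ℕ → ℤ) (hx : inD n r x)
    (i : ℕ) (hi : i ∈ Finset.Icc 1 r) (hxi : x i < (n : ℤ))
    (y : ℕ → ℤ) (hy : y = x + eVec i)
    (p : ℕ → Prop) (hp : p = (Odd : ℕ → Prop) ∨ p = (Even : ℕ → Prop))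
    (a : ℕ) (ha : a ∈ Finset.Icc 1 r) (hpa : p a)
    (hamax : ∀ t ∈ Finset.Icc 1 r, p t → ellF n g r x t ≤ ellF n g r x a)
    (hatie : ∀ t ∈ Finset.Icc 1 r, p t → t < a → ellF n g r x t < ellF n g r x a)
    (a' : ℕ) (ha' : a' ∈ Finset.Icc 1 r) (hpa' : p a')
    (hamax' : ∀ t ∈ Finset.Icc 1 r, p t → ellF n g r y t ≤ ellF n g r y a')
    (hatie' : ∀ t ∈ Finset.Icc 1 r, p t → t < a' → ellF n g r y t < ellF n g r y a')
    (hne : a' ≠ a) :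
    a' ≤ i ∧ i < a ∧ ellF n g r y a' = ellF n g r y a := by
  obtain ⟨hi1, hir⟩ := Finset.mem_Icc.mp hi
  have key : ∀ t, ellF n g r y t = ellF n g r x t + (if t ≤ i then 1 else 0) := by
    intro t
    simp only [ellF, hy]
    have hc : ∀ s ∈ Finset.Icc t r,
        (x + eVec i) s - ((n : ℤ) / 2 - (g : ℤ))
          = (x s - ((n : ℤ) / 2 - (g : ℤ))) + (if s = i then (1 : ℤ) else 0) := by
      intro s _
      simp only [Pi.add_apply, eVec]
      split <;> ring
    rw [Finset.sum_congr rfl hc, Finset.sum_add_distrib, Finset.sum_ite_eq' (Finset.Icc t r) i]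
    by_cases h : t ≤ i
    · simp [Finset.mem_Icc, h, hir]; ring
    · simp [Finset.mem_Icc, h]
  have h1 : ellF n g r x a' ≤ ellF n g r x a := hamax a' ha' hpa'
  have h2 : ellF n g r y a ≤ ellF n g r y a' := hamax' a ha hpa
  have ka := key a
  have ka' := key a'
  rcases le_or_gt a i with hai | hai <;> rcases le_or_gt a' i with ha'i | ha'i
  · simp only [if_pos hai] at ka
    simp only [if_pos ha'i] at ka'
    rcases Nat.lt_trichotomy a a' with h | h | h
    · have := hatie' a ha hpa h; linarith
    · exact absurd h.symm hne
    · have := hatie a' ha' hpa' h; linarith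
  · simp only [if_pos hai] at ka
    simp only [if_neg (Nat.not_le.mpr ha'i)] at ka'
    linarith
  · simp only [if_neg (Nat.not_le.mpr hai)] at ka
    simp only [if_pos ha'i] at ka'
    refine ⟨ha'i, hai, ?_⟩
    have hlt : a' < a := lt_of_le_of_lt ha'i hai
    have := hatie a' ha' hpa' hlt
    exact le_antisymm (by linarith) h2
  · simp only [if_neg (Nat.not_le.mpr hai)] at ka
    simp only [if_neg (Nat.not_le.mpr ha'i)] at ka'
    rcases Nat.lt_trichotomy a a' with h | h | h
    · have := hatie' a ha hpa h; linarith
    · exact absurd h.symm hne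
    · have := hatie a' ha' hpa' h; linarith
end

section
/- Fix x ∈ D. Let a (respectively b) be the odd (respectively even) index t ∈ {1,…,r} with the largest ℓ_t(x), breaking ties towards smaller indices. For 1 ≤ t ≤ r define χ_t(x) = −1 if ℓ_t(x) ≥ 0 and χ_t(x) = 0 otherwise, and for a coordinate i define χ^i_t(x) = χ_t(x) if i ≥ t and χ^i_t(x) = 0 otherwise. Then for every coordinate i with x_i < n, the marginal satisfies ∂_i h(x) = h(x + e_i) − h(x) = 1 + χ^i_a(x) + χ^i_b(x). -/
/-- `χ_t(x) = −1` if `ℓ_t(x) ≥ 0` and `0` otherwise. -/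
def chiF (n g r : ℕ) (x : ℕ → ℤ) (t : ℕ) : ℤ :=
  if 0 ≤ ellF n g r x t then -1 else 0

/-- `χ^i_t(x) = χ_t(x)` if `i ≥ t`, else `0`. -/
def chiIF (n g r : ℕ) (x : ℕ → ℤ) (i t : ℕ) : ℤ :=
  if t ≤ i then chiF n g r x t else 0

lemma fold_max_eq_max (S : Finset ℕ) (f : ℕ → ℤ) (a : ℕ) (ha : a ∈ S)
    (h : ∀ t ∈ S, f t ≤ f a) : S.fold max 0 f = max 0 (f a) := by
  apply le_antisymm
  · rw [Finset.fold_max_le]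
    exact ⟨le_max_left _ _, fun t ht => le_trans (h t ht) (le_max_right _ _)⟩
  · apply max_le
    · rw [Finset.le_fold_max]; exact Or.inl le_rfl
    · rw [Finset.le_fold_max]; exact Or.inr ⟨a, ha, le_rfl⟩

lemma ell_shift (n g r : ℕ) (x : ℕ → ℤ) (i : ℕ) (hir : i ≤ r) (t : ℕ) :
    ellF n g r (x + eVec i) t = ellF n g r x t + (if t ≤ i then 1 else 0) := by
  unfold ellF eVec
  simp only [Pi.add_apply]
  have : ∑ s ∈ Finset.Icc t r, (x s + (if s = i then (1:ℤ) else 0) - ((n : ℤ) / 2 - (g : ℤ)))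
      = (∑ s ∈ Finset.Icc t r, (x s - ((n : ℤ) / 2 - (g : ℤ))))
        + ∑ s ∈ Finset.Icc t r, (if s = i then (1:ℤ) else 0) := by
    rw [← Finset.sum_add_distrib]
    apply Finset.sum_congr rfl
    intro s _; ring
  rw [this, Finset.sum_ite_eq' (Finset.Icc t r) i (fun _ => (1:ℤ))]
  simp only [Finset.mem_Icc]
  by_cases hti : t ≤ i
  · rw [if_pos ⟨hti, hir⟩, if_pos hti]; ring
  · rw [if_neg (fun h => hti h.1), if_neg hti]; ring

lemma sum_shift (r : ℕ) (x : ℕ → ℤ) (i : ℕ) (hi : i ∈ Finset.Icc 1 r) :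
    ∑ j ∈ Finset.Icc 1 r, (x + eVec i) j = (∑ j ∈ Finset.Icc 1 r, x j) + 1 := by
  unfold eVec
  simp only [Pi.add_apply]
  rw [Finset.sum_add_distrib, Finset.sum_ite_eq' (Finset.Icc 1 r) i (fun _ => (1:ℤ)),
    if_pos hi]

/-- With `a` (resp. `b`) the odd (resp. even) index with largest `ℓ_t(x)`,
ties broken towards smaller indices, the marginal of `h` satisfies
`∂_i h(x) = 1 + χ^i_a(x) + χ^i_b(x)` for every coordinate `i` with `x_i < n`. -/
theorem marginals_formula
    (n g r : ℕ) (hn : 0 < n) (hn2 : 2 ∣ n) (hg : 0 < g) (hg4 : 4 ∣ g)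
    (hr : 3 ≤ r) (hrodd : Odd r)
    (x : ℕ → ℤ) (hx : inD n r x)
    (a : ℕ) (ha : a ∈ Finset.Icc 1 r) (haodd : Odd a)
    (hamax : ∀ t ∈ Finset.Icc 1 r, Odd t → ellF n g r x t ≤ ellF n g r x a)
    (hatie : ∀ t ∈ Finset.Icc 1 r, Odd t → t < a → ellF n g r x t < ellF n g r x a)
    (b : ℕ) (hb : b ∈ Finset.Icc 1 r) (hbeven : Even b)
    (hbmax : ∀ t ∈ Finset.Icc 1 r, Even t → ellF n g r x t ≤ ellF n g r x b)
    (hbtie : ∀ t ∈ Finset.Icc 1 r, Even t → t < b → ellF n g r x t < ellF n g r x b)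
    (i : ℕ) (hi : i ∈ Finset.Icc 1 r) (hxi : x i < (n : ℤ)) :
    hF n g r (x + eVec i) - hF n g r x = 1 + chiIF n g r x i a + chiIF n g r x i b := by
  obtain ⟨hi1, hir⟩ := Finset.mem_Icc.mp hi
  have haS : a ∈ (Finset.Icc 1 r).filter (fun t => Odd t) :=
    Finset.mem_filter.mpr ⟨ha, haodd⟩
  have hbS : b ∈ (Finset.Icc 1 r).filter (fun t => Even t) :=
    Finset.mem_filter.mpr ⟨hb, hbeven⟩
  have foldO : ((Finset.Icc 1 r).filter (fun t => Odd t)).fold max 0 (ellF n g r x)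
      = max 0 (ellF n g r x a) :=
    fold_max_eq_max _ _ _ haS (fun t ht => by
      obtain ⟨ht', hto⟩ := Finset.mem_filter.mp ht
      exact hamax t ht' hto)
  have foldE : ((Finset.Icc 1 r).filter (fun t => Even t)).fold max 0 (ellF n g r x)
      = max 0 (ellF n g r x b) :=
    fold_max_eq_max _ _ _ hbS (fun t ht => by
      obtain ⟨ht', hto⟩ := Finset.mem_filter.mp ht
      exact hbmax t ht' hto)
  have foldO' : ((Finset.Icc 1 r).filter (fun t => Odd t)).fold max 0 (ellF n g r (x + eVec i))
      = max 0 (ellF n g r x a + (if a ≤ i then 1 else 0)) := by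
    rw [fold_max_eq_max _ _ a haS, ell_shift n g r x i hir]
    intro t ht
    obtain ⟨ht', hto⟩ := Finset.mem_filter.mp ht
    rw [ell_shift n g r x i hir, ell_shift n g r x i hir]
    by_cases hai : a ≤ i
    · have := hamax t ht' hto
      split_ifs <;> omega
    · by_cases hti : t ≤ i
      · have := hatie t ht' hto (lt_of_le_of_lt hti (lt_of_not_ge hai))
        split_ifs <;> omega
      · have := hamax t ht' hto
        split_ifs <;> omega
  have foldE' : ((Finset.Icc 1 r).filter (fun t => Even t)).fold max 0 (ellF n g r (x + eVec i))
      = max 0 (ellF n g r x b + (if b ≤ i then 1 else 0)) := by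
    rw [fold_max_eq_max _ _ b hbS, ell_shift n g r x i hir]
    intro t ht
    obtain ⟨ht', hto⟩ := Finset.mem_filter.mp ht
    rw [ell_shift n g r x i hir, ell_shift n g r x i hir]
    by_cases hbi : b ≤ i
    · have := hbmax t ht' hto
      split_ifs <;> omega
    · by_cases hti : t ≤ i
      · have := hbtie t ht' hto (lt_of_le_of_lt hti (lt_of_not_ge hbi))
        split_ifs <;> omega
      · have := hbmax t ht' hto
        split_ifs <;> omega
  unfold hF chiIF chiF
  rw [foldO, foldE, foldO', foldE', sum_shift r x i hi]
  simp only [max_def]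
  split_ifs <;> omega
end

section
/- The function h is hypergrid submodular: for every x ∈ D, every coordinate i with x_i < n, and every coordinate j, one has ∂_j h(x) ≥ ∂_j h(x + e_i) whenever both marginals are defined (i.e., h(x + e_j) − h(x) ≥ h(x + e_i + e_j) − h(x + e_i) whenever all four points lie in D). -/
lemma fold_max_mem (s : Finset ℕ) (f : ℕ → ℤ) (b : ℤ) :
    s.fold max b f = b ∨ ∃ t ∈ s, s.fold max b f = f t := by
  classical
  induction s using Finset.induction_on with
  | empty => left; simp
  | @insert a s ha ih =>
    rw [Finset.fold_insert ha]
    rcases le_total (f a) (s.fold max b f) with h | h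
    · rw [max_eq_right h]
      rcases ih with h1 | ⟨t, ht, h1⟩
      · exact Or.inl h1
      · exact Or.inr ⟨t, Finset.mem_insert_of_mem ht, h1⟩
    · exact Or.inr ⟨a, Finset.mem_insert_self a s, by rw [max_eq_left h]⟩

lemma le_fold' (s : Finset ℕ) (f : ℕ → ℤ) (b : ℤ) {t : ℕ} (ht : t ∈ s) :
    f t ≤ s.fold max b f := (Finset.le_fold_max _).2 (Or.inr ⟨t, ht, le_rfl⟩)

lemma b_le_fold (s : Finset ℕ) (f : ℕ → ℤ) (b : ℤ) :
    b ≤ s.fold max b f := (Finset.le_fold_max _).2 (Or.inl le_rfl)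

lemma ell_add (n g r : ℕ) (x : ℕ → ℤ) {i : ℕ} (t : ℕ) (hi : i ∈ Finset.Icc 1 r) :
    ellF n g r (x + eVec i) t = ellF n g r x t + (if t ≤ i then 1 else 0) := by
  obtain ⟨hi1, hi2⟩ := Finset.mem_Icc.mp hi
  simp only [ellF, Pi.add_apply, eVec]
  have h1 : ∀ s ∈ Finset.Icc t r, x s + (if s = i then (1:ℤ) else 0) - ((n:ℤ)/2 - g)
      = (x s - ((n:ℤ)/2 - g)) + (if s = i then (1:ℤ) else 0) := fun s _ => by ring
  rw [Finset.sum_congr rfl h1, Finset.sum_add_distrib,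
    Finset.sum_ite_eq' (Finset.Icc t r) i (fun _ => (1:ℤ))]
  simp only [Finset.mem_Icc]
  split_ifs <;> omega

lemma fold_supermod (n g r : ℕ) (T : Finset ℕ) (x : ℕ → ℤ) {i j : ℕ}
    (hi : i ∈ Finset.Icc 1 r) (hj : j ∈ Finset.Icc 1 r) :
    T.fold max 0 (ellF n g r (x + eVec i)) + T.fold max 0 (ellF n g r (x + eVec j))
      ≤ T.fold max 0 (ellF n g r (x + eVec i + eVec j)) + T.fold max 0 (ellF n g r x) := by
  have key : ∀ t : ℕ, ellF n g r (x + eVec i + eVec j) t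
      = ellF n g r x t + (if t ≤ i then 1 else 0) + (if t ≤ j then 1 else 0) := by
    intro t
    rw [ell_add n g r (x + eVec i) t hj, ell_add n g r x t hi]
  rcases fold_max_mem T (ellF n g r (x + eVec i)) 0 with hA | ⟨t1, ht1, hA⟩ <;>
    rcases fold_max_mem T (ellF n g r (x + eVec j)) 0 with hB | ⟨t2, ht2, hB⟩
  · rw [hA, hB]
    have := b_le_fold T (ellF n g r (x + eVec i + eVec j)) 0
    have := b_le_fold T (ellF n g r x) 0
    linarith
  · -- A = 0, B = ℓ_{t2}(x+e_j)
    rw [hA, hB, ell_add n g r x t2 hj]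
    have h1 : ellF n g r (x + eVec i + eVec j) t2 ≤ T.fold max 0 _ := le_fold' T _ 0 ht2
    rw [key t2] at h1
    have h2 := b_le_fold T (ellF n g r x) 0
    have h3 : ellF n g r x t2 ≤ T.fold max 0 (ellF n g r x) := le_fold' T _ 0 ht2
    split_ifs at h1 ⊢ <;> linarith
  · rw [hA, hB, ell_add n g r x t1 hi]
    have h1 : ellF n g r (x + eVec i + eVec j) t1 ≤ T.fold max 0 _ := le_fold' T _ 0 ht1
    rw [key t1] at h1
    have h2 := b_le_fold T (ellF n g r x) 0
    have h3 : ellF n g r x t1 ≤ T.fold max 0 (ellF n g r x) := le_fold' T _ 0 ht1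
    split_ifs at h1 ⊢ <;> linarith
  · rw [hA, hB, ell_add n g r x t1 hi, ell_add n g r x t2 hj]
    rcases le_total t1 t2 with hcmp | hcmp
    · have h1 : ellF n g r (x + eVec i + eVec j) t1 ≤ T.fold max 0 _ := le_fold' T _ 0 ht1
      rw [key t1] at h1
      have h3 : ellF n g r x t2 ≤ T.fold max 0 (ellF n g r x) := le_fold' T _ 0 ht2
      have hij : (if t2 ≤ j then (1:ℤ) else 0) ≤ (if t1 ≤ j then (1:ℤ) else 0) := by
        split_ifs <;> omega
      linarith
    · have h1 : ellF n g r (x + eVec i + eVec j) t2 ≤ T.fold max 0 _ := le_fold' T _ 0 ht2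
      rw [key t2] at h1
      have h3 : ellF n g r x t1 ≤ T.fold max 0 (ellF n g r x) := le_fold' T _ 0 ht1
      have hij : (if t1 ≤ i then (1:ℤ) else 0) ≤ (if t2 ≤ i then (1:ℤ) else 0) := by
        split_ifs <;> omega
      linarith

lemma sum_add_eVec (r : ℕ) (x : ℕ → ℤ) {i : ℕ} (hi : i ∈ Finset.Icc 1 r) :
    ∑ k ∈ Finset.Icc 1 r, (x + eVec i) k = (∑ k ∈ Finset.Icc 1 r, x k) + 1 := by
  simp [Pi.add_apply, eVec, Finset.sum_add_distrib, Finset.sum_ite_eq', hi]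

/-- `h` is hypergrid submodular:
`h(x+e_j) − h(x) ≥ h(x+e_i+e_j) − h(x+e_i)` whenever all four points lie in `D`. -/
theorem hF_hypergrid_submodular
    (n g r : ℕ) (hn : 0 < n) (hn2 : 2 ∣ n) (hg : 0 < g) (hg4 : 4 ∣ g)
    (hr : 3 ≤ r) (hrodd : Odd r) :
    ∀ x : ℕ → ℤ, ∀ i ∈ Finset.Icc 1 r, ∀ j ∈ Finset.Icc 1 r,
      (∀ k ∈ Finset.Icc 1 r,
          0 ≤ x k ∧
          x k + (if k = i then 1 else 0) + (if k = j then 1 else 0) ≤ (n : ℤ)) →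
      hF n g r (x + eVec j) - hF n g r x ≥
        hF n g r (x + eVec i + eVec j) - hF n g r (x + eVec i) := by
  intro x i hi j hj _
  have Si := sum_add_eVec r x hi
  have Sj := sum_add_eVec r x hj
  have Sij := sum_add_eVec r (x + eVec i) hj
  rw [Si] at Sij
  have hO := fold_supermod n g r ((Finset.Icc 1 r).filter (fun t => Odd t)) x hi hj
  have hE := fold_supermod n g r ((Finset.Icc 1 r).filter (fun t => Even t)) x hi hj
  simp only [hF, Si, Sj, Sij]
  linarith
end

section
/- Suppose in addition that 5gr ≤ n. Let U be a finite set and P = (P_1,…,P_r) any partition of U with |P_i| = n for every i; let f_P(S) = h(x) and f*_P(S) = h*(x), where x is the signature of S (x_i = |S ∩ P_i|). Then the empty set is the unique minimizer of f_P over all subsets of U, achieving the value f_P(∅) = 0 (equivalently, h(0,…,0) = 0 and h(x) > 0 for every nonzero x ∈ D), and moreover f*_P(P_r) = h*(0,…,0,n) ≤ −g/2. -/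
lemma ell_eq (a b r : ℕ) (x : ℕ → ℤ) (t : ℕ) :
    ellF (2*a) (4*b) r x t =
      (∑ s ∈ Finset.Icc t r, x s) - ((Finset.Icc t r).card : ℤ) * ((a:ℤ) - 4*(b:ℤ)) - (b:ℤ)*(r:ℤ) := by
  unfold ellF
  have e1 : ((2*a : ℕ) : ℤ)/2 = (a:ℤ) := by omega
  have e2' : ((4*b : ℕ) : ℤ) * (r:ℤ) = 4*((b:ℤ)*(r:ℤ)) := by push_cast; ring
  have e2 : ((4*b : ℕ) : ℤ) * (r:ℤ) / 4 = (b:ℤ)*(r:ℤ) := by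
    rw [e2']; exact Int.mul_ediv_cancel_left _ (by norm_num)
  rw [e1, e2, Finset.sum_sub_distrib, Finset.sum_const, nsmul_eq_mul]
  push_cast
  ring

lemma fold_nonneg (s : Finset ℕ) (φ : ℕ → ℤ) : 0 ≤ s.fold max 0 φ :=
  (Finset.le_fold_max 0).mpr (Or.inl le_rfl)

lemma fold_le (s : Finset ℕ) (φ : ℕ → ℤ) {c : ℤ} (h0 : 0 ≤ c) (h : ∀ t ∈ s, φ t ≤ c) :
    s.fold max 0 φ ≤ c := (Finset.fold_max_le c).mpr ⟨h0, h⟩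

lemma fold_attain (s : Finset ℕ) (φ : ℕ → ℤ) :
    s.fold max 0 φ = 0 ∨ ∃ t ∈ s, s.fold max 0 φ = φ t ∧ 0 < φ t := by
  by_cases h : s.fold max 0 φ ≤ 0
  · exact Or.inl (le_antisymm h (fold_nonneg s φ))
  · push_neg at h
    right
    have h2 : ¬ (s.fold max 0 φ ≤ s.fold max 0 φ - 1) := by omega
    rw [Finset.fold_max_le] at h2
    push_neg at h2
    obtain ⟨t, ht, hφ⟩ := h2 (by omega)
    have h3 : φ t ≤ s.fold max 0 φ := (Finset.le_fold_max (φ t)).mpr (Or.inr ⟨t, ht, le_rfl⟩)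
    exact ⟨t, ht, le_antisymm (by omega) h3, by omega⟩

lemma ell_bound1 (a b r : ℕ) (x : ℕ → ℤ) (t : ℕ) (ht : t ∈ Finset.Icc 1 r)
    (hx0 : ∀ j ∈ Finset.Icc 1 r, 0 ≤ x j) (hab : 4*(b:ℤ) ≤ (a:ℤ)) :
    ellF (2*a) (4*b) r x t ≤ (∑ j ∈ Finset.Icc 1 r, x j) - ((a:ℤ) - 4*(b:ℤ)) - (b:ℤ)*(r:ℤ) := by
  rw [ell_eq]
  simp only [Finset.mem_Icc] at ht
  have hsub : Finset.Icc t r ⊆ Finset.Icc 1 r := Finset.Icc_subset_Icc (by omega) le_rfl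
  have hs : (∑ s ∈ Finset.Icc t r, x s) ≤ ∑ j ∈ Finset.Icc 1 r, x j :=
    Finset.sum_le_sum_of_subset_of_nonneg hsub (fun j hj _ => hx0 j hj)
  have hc : 1 ≤ ((Finset.Icc t r).card : ℤ) := by
    have : 1 ≤ (Finset.Icc t r).card := by rw [Nat.card_Icc]; omega
    exact_mod_cast this
  nlinarith [hs, hc, hab]

lemma hF_pos (a b r : ℕ) (hb : 0 < b) (hr : 3 ≤ r) (ha : 10*b*r ≤ a)
    (x : ℕ → ℤ) (hx : inD (2*a) r x) (hnz : ∃ j ∈ Finset.Icc 1 r, x j ≠ 0) :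
    0 < hF (2*a) (4*b) r x := by
  obtain ⟨j0, hj0, hj0ne⟩ := hnz
  have hx0 : ∀ j ∈ Finset.Icc 1 r, 0 ≤ x j := fun j hj => (hx j hj).1
  have hx1 : ∀ j ∈ Finset.Icc 1 r, x j ≤ ((2*a:ℕ):ℤ) := fun j hj => (hx j hj).2
  have hB : 1 ≤ (b:ℤ) := by exact_mod_cast hb
  have hR : 3 ≤ (r:ℤ) := by exact_mod_cast hr
  have hA : 10*(b:ℤ)*(r:ℤ) ≤ (a:ℤ) := by exact_mod_cast ha
  have hab : 4*(b:ℤ) ≤ (a:ℤ) := by nlinarith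
  set S := ∑ j ∈ Finset.Icc 1 r, x j with hS
  have hS1 : 1 ≤ S := by
    have h1 : 1 ≤ x j0 := by have := hx0 j0 hj0; omega
    have h2 := Finset.single_le_sum (f := x) hx0 hj0
    omega
  have hkey : ∀ t1 ∈ Finset.Icc 1 r, ∀ t2 ∈ Finset.Icc 1 r, t1 < t2 →
      ellF (2*a) (4*b) r x t1 + ellF (2*a) (4*b) r x t2 < S := by
    intro t1 ht1 t2 ht2 hlt
    rw [ell_eq, ell_eq]
    simp only [Finset.mem_Icc] at ht1 ht2
    set C1 := ((Finset.Icc t1 r).card : ℤ) with hC1d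
    set C2 := ((Finset.Icc t2 r).card : ℤ) with hC2d
    have hc1 : (Finset.Icc t1 r).card = r + 1 - t1 := Nat.card_Icc _ _
    have hc2 : (Finset.Icc t2 r).card = r + 1 - t2 := Nat.card_Icc _ _
    have hC2le : C2 ≤ C1 - 1 := by rw [hC1d, hC2d, hc1, hc2]; push_cast; omega
    have hC1le : C1 ≤ (r:ℤ) := by rw [hC1d, hc1]; push_cast; omega
    have hC2nn : 0 ≤ C2 := by positivity
    have hs1 : (∑ s ∈ Finset.Icc t1 r, x s) ≤ S :=
      Finset.sum_le_sum_of_subset_of_nonneg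
        (Finset.Icc_subset_Icc (by omega) le_rfl) (fun j hj _ => hx0 j hj)
    have hs2 : (∑ s ∈ Finset.Icc t2 r, x s) ≤ C2 * (2*(a:ℤ)) := by
      have := Finset.sum_le_card_nsmul (Finset.Icc t2 r) x (2*(a:ℤ))
        (fun j hj => by
          have hj' := Finset.mem_Icc.mp hj
          have := hx1 j (Finset.mem_Icc.mpr ⟨by omega, hj'.2⟩)
          push_cast at this; omega)
      rw [nsmul_eq_mul] at this
      exact this
    nlinarith [mul_nonneg (sub_nonneg.mpr hC2le) (by linarith : (0:ℤ) ≤ (a:ℤ) + 4*b),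
      mul_nonneg (sub_nonneg.mpr hC1le) (by linarith : (0:ℤ) ≤ 8*(b:ℤ))]
  unfold hF
  rcases fold_attain ((Finset.Icc 1 r).filter (fun t => Odd t)) (ellF (2*a) (4*b) r x) with
    ho | ⟨u, hto, hoeq, hopos⟩ <;>
  rcases fold_attain ((Finset.Icc 1 r).filter (fun t => Even t)) (ellF (2*a) (4*b) r x) with
    he | ⟨v, hte, heeq, hepos⟩
  · rw [ho, he]; omega
  · rw [ho, heeq]
    have := ell_bound1 a b r x v (Finset.mem_filter.mp hte).1 hx0 hab
    nlinarith
  · rw [hoeq, he]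
    have := ell_bound1 a b r x u (Finset.mem_filter.mp hto).1 hx0 hab
    nlinarith
  · rw [hoeq, heeq]
    obtain ⟨hto1, hto2⟩ := Finset.mem_filter.mp hto
    obtain ⟨hte1, hte2⟩ := Finset.mem_filter.mp hte
    have hne : u ≠ v := by
      intro h; rw [h] at hto2; exact (Nat.not_even_iff_odd.mpr hto2) hte2
    rcases lt_or_gt_of_ne hne with h | h
    · have := hkey u hto1 v hte1 h; linarith
    · have := hkey v hte1 u hto1 h; linarith

lemma hF_zero (a b r : ℕ) (hab : 4*(b:ℤ) ≤ (a:ℤ)) :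
    hF (2*a) (4*b) r (fun _ => 0) = 0 := by
  have hfold : ∀ s : Finset ℕ, s.fold max 0 (ellF (2*a) (4*b) r (fun _ => 0)) = 0 := by
    intro s
    refine le_antisymm (fold_le s _ le_rfl ?_) (fold_nonneg s _)
    intro t _
    rw [ell_eq]
    have hc : 0 ≤ ((Finset.Icc t r).card : ℤ) := by positivity
    have hbr : 0 ≤ (b:ℤ)*(r:ℤ) := by positivity
    simp only [Finset.sum_const_zero]
    nlinarith
  unfold hF
  rw [hfold, hfold, Finset.sum_const_zero]
  ring

lemma hF_ind (a b r : ℕ) (hr : 3 ≤ r) (hab : 4*(b:ℤ) ≤ (a:ℤ)) (hb : 0 ≤ (b:ℤ)) :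
    hF (2*a) (4*b) r (fun j => if j = r then ((a:ℤ) - b) else 0) = (a:ℤ) - (b:ℤ) := by
  have hsum : ∀ t, 1 ≤ t → t ≤ r →
      (∑ s ∈ Finset.Icc t r, (fun j => if j = r then ((a:ℤ) - b) else 0) s) = (a:ℤ) - b := by
    intro t h1 h2
    rw [Finset.sum_ite_eq' (Finset.Icc t r) r (fun _ => (a:ℤ) - b)]
    simp [Finset.mem_Icc, h2]
  have hfold : ∀ s : Finset ℕ, s ⊆ Finset.Icc 1 r →
      s.fold max 0 (ellF (2*a) (4*b) r (fun j => if j = r then ((a:ℤ) - b) else 0)) = 0 := by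
    intro s hs
    refine le_antisymm (fold_le s _ le_rfl ?_) (fold_nonneg s _)
    intro t hts
    have ht := Finset.mem_Icc.mp (hs hts)
    rw [ell_eq, hsum t ht.1 ht.2]
    have hc : 1 ≤ ((Finset.Icc t r).card : ℤ) := by
      have : 1 ≤ (Finset.Icc t r).card := by rw [Nat.card_Icc]; omega
      exact_mod_cast this
    have hR : 3 ≤ (r:ℤ) := by exact_mod_cast hr
    nlinarith
  unfold hF
  rw [hfold _ (Finset.filter_subset _ _), hfold _ (Finset.filter_subset _ _),
    hsum 1 le_rfl (by omega)]
  ring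

lemma hF_congr (n g r : ℕ) {x y : ℕ → ℤ} (h : ∀ j ∈ Finset.Icc 1 r, x j = y j) :
    hF n g r x = hF n g r y := by
  have hell : ∀ t ∈ Finset.Icc 1 r, ellF n g r x t = ellF n g r y t := by
    intro t ht
    have ht' := Finset.mem_Icc.mp ht
    unfold ellF
    congr 1
    refine Finset.sum_congr rfl (fun s hs => ?_)
    have hs' := Finset.mem_Icc.mp hs
    rw [h s (Finset.mem_Icc.mpr ⟨by omega, hs'.2⟩)]
  unfold hF
  rw [Finset.sum_congr rfl (fun j hj => h j hj),
    Finset.fold_congr (fun t ht => hell t (Finset.mem_filter.mp ht).1),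
    Finset.fold_congr (fun t ht => hell t (Finset.mem_filter.mp ht).1)]

lemma hStar_e (a b r : ℕ) (hb : 0 < b) (hr : 3 ≤ r) (hab : 4*(b:ℤ) ≤ (a:ℤ)) :
    hStarF (2*a) (4*b) r (fun j => if j = r then ((2*a:ℕ):ℤ) else 0) = -(2*(b:ℤ)) := by
  have d1 : ((2*a:ℕ):ℤ)/2 = (a:ℤ) := by omega
  have d2 : ((4*b:ℕ):ℤ)/4 = (b:ℤ) := by omega
  have hB : 1 ≤ (b:ℤ) := by exact_mod_cast hb
  unfold hStarF
  rw [d1, d2, if_neg (by simp; push_cast; omega)]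
  have htr : truncF (2*a) (4*b) r (fun j => if j = r then ((2*a:ℕ):ℤ) else 0)
      = (fun j => if j = r then ((a:ℤ) - b) else 0) := by
    funext j
    unfold truncF
    rw [d1, d2]
    by_cases hj : j = r <;> simp [hj]
    push_cast; omega
  rw [htr, hF_ind a b r hr hab (by positivity)]
  simp only [if_pos rfl]
  push_cast; ring

lemma hStarF_congr (n g r : ℕ) (hr : 1 ≤ r) {x y : ℕ → ℤ}
    (h : ∀ j ∈ Finset.Icc 1 r, x j = y j) :
    hStarF n g r x = hStarF n g r y := by
  have hxr : x r = y r := h r (Finset.mem_Icc.mpr ⟨hr, le_rfl⟩)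
  have htr : ∀ j ∈ Finset.Icc 1 r, truncF n g r x j = truncF n g r y j := by
    intro j hj
    unfold truncF
    by_cases hjr : j = r <;> simp [hjr, hxr, h j hj]
  unfold hStarF
  rw [hxr, hF_congr n g r h, hF_congr n g r htr]


/-- If `5gr ≤ n` and `P` is a partition of a finite set into `r` parts of
size `n`, then `∅` is the unique minimizer of `f_P`, achieving value `0` (equivalently,
`h(0,…,0) = 0` and `h(x) > 0` for every nonzero `x ∈ D`), and `f*_P(P_r) ≤ −g/2`. -/
theorem empty_unique_minimizer
    {α : Type*} [Fintype α] [DecidableEq α]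
    (n g r : ℕ) (hn : 0 < n) (hn2 : 2 ∣ n) (hg : 0 < g) (hg4 : 4 ∣ g)
    (hr : 3 ≤ r) (hrodd : Odd r) (hgrn : 5 * g * r ≤ n)
    (P : ℕ → Finset α)
    (hdisj : ∀ i ∈ Finset.Icc 1 r, ∀ j ∈ Finset.Icc 1 r, i ≠ j → Disjoint (P i) (P j))
    (hcover : ∀ a : α, ∃ i ∈ Finset.Icc 1 r, a ∈ P i)
    (hcard : ∀ i ∈ Finset.Icc 1 r, (P i).card = n)
    (f fstar : Finset α → ℤ)
    (hf : ∀ S : Finset α, f S = hF n g r (fun j => ((S ∩ P j).card : ℤ)))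
    (hfstar : ∀ S : Finset α, fstar S = hStarF n g r (fun j => ((S ∩ P j).card : ℤ))) :
    f ∅ = 0 ∧
    (∀ S : Finset α, S.Nonempty → 0 < f S) ∧
    hF n g r (fun _ => 0) = 0 ∧
    (∀ x : ℕ → ℤ, inD n r x → (∃ j ∈ Finset.Icc 1 r, x j ≠ 0) → 0 < hF n g r x) ∧
    fstar (P r) = hStarF n g r (fun j => if j = r then (n : ℤ) else 0) ∧
    fstar (P r) ≤ -((g : ℤ) / 2) := by
  obtain ⟨a, rfl⟩ := hn2
  obtain ⟨b, rfl⟩ := hg4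
  have hb : 0 < b := by omega
  have hr1 : (1:ℕ) ≤ r := by omega
  have ha : 10*b*r ≤ a := by
    have h := hgrn
    ring_nf at h ⊢
    linarith
  have hab : 4*(b:ℤ) ≤ (a:ℤ) := by
    have h4 : 4*b ≤ a := by nlinarith
    exact_mod_cast h4
  have hzero : hF (2*a) (4*b) r (fun _ => 0) = 0 := hF_zero a b r hab
  have hposD : ∀ x : ℕ → ℤ, inD (2*a) r x → (∃ j ∈ Finset.Icc 1 r, x j ≠ 0) →
      0 < hF (2*a) (4*b) r x := fun x hx hnz => hF_pos a b r hb hr ha x hx hnz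
  have h5 : fstar (P r) = hStarF (2*a) (4*b) r (fun j => if j = r then ((2*a:ℕ):ℤ) else 0) := by
    rw [hfstar]
    apply hStarF_congr _ _ _ hr1
    intro j hj
    by_cases hjr : j = r
    · subst hjr
      simp [Finset.inter_self, hcard j hj]
    · have hd := hdisj r (Finset.mem_Icc.mpr ⟨hr1, le_rfl⟩) j hj (fun h => hjr h.symm)
      rw [if_neg hjr, Finset.disjoint_iff_inter_eq_empty.mp hd]
      simp
  refine ⟨?_, ?_, hzero, hposD, h5, ?_⟩
  · rw [hf]
    have he : (fun j => (((∅: Finset α) ∩ P j).card : ℤ)) = fun _ => (0:ℤ) := by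
      funext j; simp
    rw [he, hzero]
  · intro S hSne
    rw [hf]
    apply hposD
    · intro j hj
      refine ⟨Int.natCast_nonneg _, ?_⟩
      have h1 : (S ∩ P j).card ≤ (P j).card := Finset.card_le_card Finset.inter_subset_right
      have h2 := hcard j hj
      show ((S ∩ P j).card : ℤ) ≤ ((2*a:ℕ):ℤ)
      exact_mod_cast h1.trans_eq h2
    · obtain ⟨a0, ha0⟩ := hSne
      obtain ⟨i, hi, hPi⟩ := hcover a0
      refine ⟨i, hi, ?_⟩
      show ((S ∩ P i).card : ℤ) ≠ 0
      have hm : a0 ∈ S ∩ P i := Finset.mem_inter.mpr ⟨ha0, hPi⟩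
      have hne : (S ∩ P i).card ≠ 0 := Finset.card_ne_zero_of_mem hm
      exact_mod_cast hne
  · rw [h5, hStar_e a b r hb hr hab]
    omega
end

section
/- Let 1 ≤ i ≤ r − 2. If x and x' are two i-balanced points of D with x_j = x'_j for all j ≤ i and Σ_{j=1}^{r} x_j = Σ_{j=1}^{r} x'_j, then h(x) = h(x'). -/
lemma ell_step (n g r i : ℕ) (hg4 : 4 ∣ g) (x : ℕ → ℤ) (hbal : iBal g r i x)
    (u : ℕ) (hu : i ≤ u) (hur : u + 2 ≤ r) (hpos : 0 < ellF n g r x (u + 2)) :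
    ellF n g r x (u + 2) ≤ ellF n g r x u := by
  set c : ℤ := (n : ℤ) / 2 - (g : ℤ) with hc
  set q : ℤ := ((g : ℤ) * (r : ℤ)) / 4 with hq
  have hq4 : 4 * q = (g : ℤ) * (r : ℤ) := by
    obtain ⟨k, hk⟩ := hg4
    rw [hq, hk]; push_cast; ring_nf
    rw [mul_comm, Int.mul_ediv_assoc]
    · ring
    · norm_num
  have h1 : Finset.Icc u r = insert u (Finset.Icc (u + 1) r) := by
    ext a; simp only [Finset.mem_Icc, Finset.mem_insert]; omega
  have h2 : Finset.Icc (u+1) r = insert (u+1) (Finset.Icc (u + 2) r) := by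
    ext a; simp only [Finset.mem_Icc, Finset.mem_insert]; omega
  have hnm1 : u ∉ Finset.Icc (u+1) r := by simp
  have hnm2 : u + 1 ∉ Finset.Icc (u+2) r := by simp
  have hsplit : ellF n g r x u
      = (x u - c) + ((x (u+1) - c) + ellF n g r x (u + 2)) := by
    unfold ellF
    rw [h1, Finset.sum_insert hnm1, h2, Finset.sum_insert hnm2]
    ring
  rw [hsplit]
  -- suffices: 0 ≤ (x u - c) + (x (u+1) - c)
  have key : 0 ≤ (x u - c) + (x (u+1) - c) := by
    set m : ℕ := (Finset.Icc (u+2) r).card with hm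
    have hmcard : m = r + 1 - (u + 2) := by rw [hm, Nat.card_Icc]
    have hm1 : 1 ≤ m := by omega
    have hmr : m ≤ r := by omega
    set S : ℤ := ∑ s ∈ Finset.Icc (u+2) r, x s with hS
    have hposS : (m : ℤ) * c + q + 1 ≤ S := by
      have : ellF n g r x (u+2) = S - (m : ℤ) * c - q := by
        unfold ellF
        rw [Finset.sum_sub_distrib, Finset.sum_const, nsmul_eq_mul]
      omega
    have hSle : 8 * S ≤ (m : ℤ) * (8 * x i + g) := by
      have hb : ∀ s ∈ Finset.Icc (u+2) r, 8 * x s ≤ 8 * x i + (g:ℤ) := by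
        intro s hs
        simp only [Finset.mem_Icc] at hs
        have := (hbal s (by omega) hs.2).2
        linarith
      have := Finset.sum_le_card_nsmul _ _ _ hb
      rw [nsmul_eq_mul] at this
      calc 8 * S = ∑ s ∈ Finset.Icc (u+2) r, 8 * x s := by rw [hS, Finset.mul_sum]
        _ ≤ (m:ℤ) * (8 * x i + g) := this
    have hA : 8 * x i - (g:ℤ) ≤ 8 * x u := by
      rcases eq_or_lt_of_le hu with h | h
      · have : (0:ℤ) ≤ g := by positivity
        rw [h]; linarith
      · have := (hbal u h (by omega)).1; linarith
    have hB : 8 * x i - (g:ℤ) ≤ 8 * x (u+1) := by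
      have := (hbal (u+1) (by omega) (by omega)).1; linarith
    have hM0 : (0:ℤ) ≤ (m:ℤ) := by positivity
    have hM1 : (1:ℤ) ≤ (m:ℤ) := by exact_mod_cast hm1
    have hMr : (m:ℤ) ≤ (r:ℤ) := by exact_mod_cast hmr
    have hgr : (0:ℤ) ≤ (g:ℤ) * ((r:ℤ) - (m:ℤ)) := by
      apply mul_nonneg (by positivity); linarith
    have hprod : 0 < (m:ℤ) * ((x u - c) + (x (u+1) - c)) := by
      have hA' : (m:ℤ) * (8 * x i - g) ≤ (m:ℤ) * (8 * x u) :=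
        mul_le_mul_of_nonneg_left hA hM0
      have hB' : (m:ℤ) * (8 * x i - g) ≤ (m:ℤ) * (8 * x (u+1)) :=
        mul_le_mul_of_nonneg_left hB hM0
      nlinarith [hSle, hposS, hq4, hgr]
    by_contra hcon
    push_neg at hcon
    have : (m:ℤ) * ((x u - c) + (x (u+1) - c)) ≤ 0 :=
      mul_nonpos_of_nonneg_of_nonpos hM0 (le_of_lt hcon)
    linarith
  linarith

lemma fold_trunc (n g r i : ℕ) (hg4 : 4 ∣ g) (x : ℕ → ℤ) (hbal : iBal g r i x)
    (hi1 : 1 ≤ i) (hir : i + 2 ≤ r)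
    (P : ℕ → Prop) [DecidablePred P] (hP : ∀ t, P (t + 2) → P t) :
    ((Finset.Icc 1 r).filter P).fold max 0 (ellF n g r x)
      = ((Finset.Icc 1 (i + 1)).filter P).fold max 0 (ellF n g r x) := by
  have hR0 : (0:ℤ) ≤ ((Finset.Icc 1 (i + 1)).filter P).fold max 0 (ellF n g r x) :=
    (Finset.le_fold_max _).mpr (Or.inl le_rfl)
  have hL0 : (0:ℤ) ≤ ((Finset.Icc 1 r).filter P).fold max 0 (ellF n g r x) :=
    (Finset.le_fold_max _).mpr (Or.inl le_rfl)
  have key : ∀ t, 1 ≤ t → t ≤ r → P t →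
      ellF n g r x t ≤ ((Finset.Icc 1 (i + 1)).filter P).fold max 0 (ellF n g r x) := by
    intro t
    induction t using Nat.strong_induction_on with
    | _ t ih =>
      intro h1 h2 hPt
      by_cases hle : t ≤ i + 1
      · refine (Finset.le_fold_max _).mpr (Or.inr ⟨t, ?_, le_rfl⟩)
        simp only [Finset.mem_filter, Finset.mem_Icc]
        exact ⟨⟨h1, hle⟩, hPt⟩
      · by_cases hpos : 0 < ellF n g r x t
        · obtain ⟨u, rfl⟩ : ∃ u, t = u + 2 := ⟨t - 2, by omega⟩
          have hstep := ell_step n g r i hg4 x hbal u (by omega) (by omega) hpos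
          exact le_trans hstep (ih u (by omega) (by omega) (by omega) (hP u hPt))
        · push_neg at hpos
          exact le_trans hpos hR0
  apply le_antisymm
  · rw [Finset.fold_max_le]
    refine ⟨hR0, ?_⟩
    intro t ht
    simp only [Finset.mem_filter, Finset.mem_Icc] at ht
    exact key t ht.1.1 ht.1.2 ht.2
  · rw [Finset.fold_max_le]
    refine ⟨hL0, ?_⟩
    intro t ht
    simp only [Finset.mem_filter, Finset.mem_Icc] at ht
    refine (Finset.le_fold_max _).mpr (Or.inr ⟨t, ?_, le_rfl⟩)
    simp only [Finset.mem_filter, Finset.mem_Icc]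
    exact ⟨⟨ht.1.1, by omega⟩, ht.2⟩

lemma ell_congr (n g r i : ℕ) (x x' : ℕ → ℤ)
    (hagree : ∀ j ∈ Finset.Icc 1 i, x j = x' j)
    (hsum : ∑ j ∈ Finset.Icc 1 r, x j = ∑ j ∈ Finset.Icc 1 r, x' j)
    (t : ℕ) (h1 : 1 ≤ t) (h2 : t ≤ i + 1) (hir : i + 1 ≤ r) :
    ellF n g r x t = ellF n g r x' t := by
  have hsuffix : ∑ s ∈ Finset.Icc t r, x s = ∑ s ∈ Finset.Icc t r, x' s := by
    have e1 : Finset.Icc t r = Finset.Ioc (t - 1) r := by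
      ext a; simp only [Finset.mem_Icc, Finset.mem_Ioc]; omega
    have e2 : Finset.Icc 1 r = Finset.Ioc 0 r := by
      ext a; simp only [Finset.mem_Icc, Finset.mem_Ioc]; omega
    have c1 := Finset.sum_Ioc_consecutive x (Nat.zero_le (t-1)) (by omega : t - 1 ≤ r)
    have c2 := Finset.sum_Ioc_consecutive x' (Nat.zero_le (t-1)) (by omega : t - 1 ≤ r)
    have hpre : ∑ s ∈ Finset.Ioc 0 (t-1), x s = ∑ s ∈ Finset.Ioc 0 (t-1), x' s := by
      apply Finset.sum_congr rfl
      intro s hs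
      simp only [Finset.mem_Ioc] at hs
      exact hagree s (by simp only [Finset.mem_Icc]; omega)
    rw [e2] at hsum
    rw [e1]
    omega
  unfold ellF
  simp only [Finset.sum_sub_distrib, hsuffix]

/-- For `1 ≤ i ≤ r − 2`, two `i`-balanced points of `D` agreeing on the
first `i` coordinates and with equal coordinate sums have the same `h`-value. -/
theorem hF_suffix_indistinguishable
    (n g r : ℕ) (hn : 0 < n) (hn2 : 2 ∣ n) (hg : 0 < g) (hg4 : 4 ∣ g)
    (hr : 3 ≤ r) (hrodd : Odd r)
    (i : ℕ) (hi1 : 1 ≤ i) (hi2 : i ≤ r - 2)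
    (x x' : ℕ → ℤ) (hx : inD n r x) (hx' : inD n r x')
    (hbal : iBal g r i x) (hbal' : iBal g r i x')
    (hagree : ∀ j ∈ Finset.Icc 1 i, x j = x' j)
    (hsum : ∑ j ∈ Finset.Icc 1 r, x j = ∑ j ∈ Finset.Icc 1 r, x' j) :
    hF n g r x = hF n g r x' := by
  have hir : i + 2 ≤ r := by omega
  have hOdd : ∀ t, Odd (t + 2) → Odd t := by
    rintro t ⟨k, hk⟩; exact ⟨k - 1, by omega⟩
  have hEven : ∀ t, Even (t + 2) → Even t := by
    rintro t ⟨k, hk⟩; exact ⟨k - 1, by omega⟩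
  have e1 : ((Finset.Icc 1 (i + 1)).filter (fun t => Odd t)).fold max 0 (ellF n g r x)
      = ((Finset.Icc 1 (i + 1)).filter (fun t => Odd t)).fold max 0 (ellF n g r x') := by
    apply Finset.fold_congr
    intro t ht
    simp only [Finset.mem_filter, Finset.mem_Icc] at ht
    exact ell_congr n g r i x x' hagree hsum t ht.1.1 ht.1.2 (by omega)
  have e2 : ((Finset.Icc 1 (i + 1)).filter (fun t => Even t)).fold max 0 (ellF n g r x)
      = ((Finset.Icc 1 (i + 1)).filter (fun t => Even t)).fold max 0 (ellF n g r x') := by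
    apply Finset.fold_congr
    intro t ht
    simp only [Finset.mem_filter, Finset.mem_Icc] at ht
    exact ell_congr n g r i x x' hagree hsum t ht.1.1 ht.1.2 (by omega)
  unfold hF
  rw [fold_trunc n g r i hg4 x hbal hi1 hir _ hOdd,
      fold_trunc n g r i hg4 x hbal hi1 hir _ hEven,
      fold_trunc n g r i hg4 x' hbal' hi1 hir _ hOdd,
      fold_trunc n g r i hg4 x' hbal' hi1 hir _ hEven,
      hsum, e1, e2]
end

section
/- Let 1 ≤ i < r/2. If x ∈ D is i-balanced, then h*(x) = h(x). -/
/-- Shifting the function by a constant `δ` that is dominated by some value in the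
finset shifts the `fold max 0` by `δ`. -/
lemma fold_max_shift (S : Finset ℕ) (f : ℕ → ℤ) (δ : ℤ) (t0 : ℕ) (ht0 : t0 ∈ S)
    (hδf : δ ≤ f t0) (hδ0 : 0 ≤ δ) :
    S.fold max 0 (fun t => f t - δ) = S.fold max 0 f - δ := by
  have hmem : ∀ s ∈ S, f s ≤ S.fold max 0 f := fun s hs =>
    (Finset.le_fold_max _).mpr (Or.inr ⟨s, hs, le_rfl⟩)
  have hmem' : ∀ s ∈ S, f s - δ ≤ S.fold max 0 (fun t => f t - δ) := fun s hs =>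
    (Finset.le_fold_max _).mpr (Or.inr ⟨s, hs, le_rfl⟩)
  apply le_antisymm
  · rw [Finset.fold_max_le]
    exact ⟨by linarith [hmem t0 ht0], fun s hs => by linarith [hmem s hs]⟩
  · have h2 : S.fold max 0 f ≤ S.fold max 0 (fun t => f t - δ) + δ := by
      rw [Finset.fold_max_le]
      exact ⟨by linarith [hmem' t0 ht0], fun s hs => by linarith [hmem' s hs]⟩
    linarith

/-- For `1 ≤ i < r/2`, if `x ∈ D` is `i`-balanced then `h*(x) = h(x)`. -/
theorem hStarF_eq_hF_of_balanced
    (n g r : ℕ) (hn : 0 < n) (hn2 : 2 ∣ n) (hg : 0 < g) (hg4 : 4 ∣ g)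
    (hr : 3 ≤ r) (hrodd : Odd r)
    (i : ℕ) (hi1 : 1 ≤ i) (hi2 : 2 * i < r)
    (x : ℕ → ℤ) (hx : inD n r x) (hbal : iBal g r i x) :
    hStarF n g r x = hF n g r x := by
  by_cases hc : x r ≤ (n : ℤ) / 2 - (g : ℤ) / 4
  · rw [hStarF, if_pos hc]
  rw [hStarF, if_neg hc]
  push_neg at hc
  -- notation
  obtain ⟨q0, hq0⟩ := hg4
  set q : ℤ := (q0 : ℤ) with hq
  have hgq : (g : ℤ) = 4 * q := by rw [hq0]; push_cast; ring
  have hq4 : (g : ℤ) / 4 = q := by rw [hgq, Int.mul_ediv_cancel_left _ (by norm_num)]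
  have hqr : ((g : ℤ) * (r : ℤ)) / 4 = q * r := by
    rw [hgq, mul_assoc, Int.mul_ediv_cancel_left _ (by norm_num)]
  have hqpos : 0 < q := by
    have : 0 < (g : ℤ) := by exact_mod_cast hg
    linarith [hgq]
  set c0 : ℤ := (n : ℤ) / 2 with hc0
  set b : ℤ := c0 - (g : ℤ) / 4 with hb
  set δ : ℤ := x r - b with hδ
  have hδ1 : 1 ≤ δ := by
    have : b < x r := hc
    omega
  -- coordinates ≥ i are all ≥ x r - q
  have hir : i < r := by omega
  have hcoord : ∀ s : ℕ, i ≤ s → s ≤ r → x r - q ≤ x s := by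
    intro s hs1 hs2
    have h1 := (hbal r hir le_rfl).2
    rcases eq_or_lt_of_le hs1 with h | h
    · rw [← h]; linarith [hgq]
    · have h2 := (hbal s h hs2).1
      linarith [hgq]
  -- the key lower bound on ℓ_t
  have key : ∀ t : ℕ, i ≤ t → t ≤ r → r + 1 ≤ 2 * (r - t + 1) → δ ≤ ellF n g r x t := by
    intro t ht1 ht2 hk
    have hcard : (Finset.Icc t r).card = r - t + 1 := by
      rw [Nat.card_Icc]; omega
    have hlow : ∀ s ∈ Finset.Icc t r, (x r - q) - (c0 - (g : ℤ)) ≤ x s - (c0 - (g : ℤ)) := by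
      intro s hs
      rw [Finset.mem_Icc] at hs
      have := hcoord s (le_trans ht1 hs.1) hs.2
      linarith
    have hsum := Finset.card_nsmul_le_sum (Finset.Icc t r) _ _ hlow
    rw [hcard, nsmul_eq_mul] at hsum
    rw [ellF, hqr]
    have hk' : ((r : ℤ) + 1) ≤ 2 * ((r - t + 1 : ℕ) : ℤ) := by exact_mod_cast hk
    have hkpos : (1 : ℤ) ≤ ((r - t + 1 : ℕ) : ℤ) := by exact_mod_cast (by omega : 1 ≤ r - t + 1)
    have hxr : x r = δ + c0 - q := by rw [hδ, hb, hq4]; ring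
    set k : ℤ := ((r - t + 1 : ℕ) : ℤ)
    have hterm : (x r - q) - (c0 - (g : ℤ)) = δ + 2 * q := by
      rw [hxr, hgq]; ring
    rw [hterm] at hsum
    have h1 : (0 : ℤ) ≤ (k - 1) * δ := mul_nonneg (by linarith) (by linarith)
    have h2 : q * ((r : ℤ)) + q ≤ q * (2 * k) := by
      have := mul_le_mul_of_nonneg_left hk' (le_of_lt hqpos)
      linarith [this]
    nlinarith [hsum]
  -- witnesses: t = m and t = m+1 where r = 2m+1
  obtain ⟨m, hm⟩ := hrodd
  have hm1 : 1 ≤ m := by omega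
  have him : i ≤ m := by omega
  have hw1 : δ ≤ ellF n g r x m := key m him (by omega) (by omega)
  have hw2 : δ ≤ ellF n g r x (m + 1) := key (m + 1) (by omega) (by omega) (by omega)
  have hmmem : m ∈ Finset.Icc 1 r := by rw [Finset.mem_Icc]; omega
  have hm1mem : m + 1 ∈ Finset.Icc 1 r := by rw [Finset.mem_Icc]; omega
  -- odd and even witnesses
  have hwit : (∃ t ∈ (Finset.Icc 1 r).filter (fun t => Odd t), δ ≤ ellF n g r x t) ∧
      (∃ t ∈ (Finset.Icc 1 r).filter (fun t => Even t), δ ≤ ellF n g r x t) := by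
    rcases Nat.even_or_odd m with he | ho
    · exact ⟨⟨m + 1, Finset.mem_filter.mpr ⟨hm1mem, Even.add_one he⟩, hw2⟩,
        ⟨m, Finset.mem_filter.mpr ⟨hmmem, he⟩, hw1⟩⟩
    · exact ⟨⟨m, Finset.mem_filter.mpr ⟨hmmem, ho⟩, hw1⟩,
        ⟨m + 1, Finset.mem_filter.mpr ⟨hm1mem, Odd.add_one ho⟩, hw2⟩⟩
  obtain ⟨⟨t1, ht1f, ht1v⟩, ⟨t2, ht2f, ht2v⟩⟩ := hwit
  -- truncation shifts everything by δ
  have htruncr : truncF n g r x r = x r - δ := by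
    have h0 : truncF n g r x r = min (x r) ((n : ℤ) / 2 - (g : ℤ) / 4) := if_pos rfl
    rw [h0, min_eq_right (le_of_lt hc), hδ, hb, hc0]; ring
  have hdiff : ∀ t : ℕ, t ≤ r →
      ∑ s ∈ Finset.Icc t r, (x s - truncF n g r x s) = δ := by
    intro t ht
    have : ∀ s ∈ Finset.Icc t r, x s - truncF n g r x s = if s = r then δ else 0 := by
      intro s _
      by_cases hsr : s = r
      · rw [if_pos hsr, hsr, htruncr]; ring
      · rw [if_neg hsr, truncF]; simp [hsr]
    rw [Finset.sum_congr rfl this, Finset.sum_ite_eq' (Finset.Icc t r) r (fun _ => δ)]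
    rw [if_pos (Finset.mem_Icc.mpr ⟨ht, le_rfl⟩)]
  have hell : ∀ t ∈ Finset.Icc 1 r, ellF n g r (truncF n g r x) t = ellF n g r x t - δ := by
    intro t ht
    rw [Finset.mem_Icc] at ht
    have h1 : ∑ s ∈ Finset.Icc t r, (x s - (c0 - (g : ℤ)))
        - ∑ s ∈ Finset.Icc t r, (truncF n g r x s - (c0 - (g : ℤ))) = δ := by
      rw [← Finset.sum_sub_distrib]
      rw [← hdiff t ht.2]
      apply Finset.sum_congr rfl
      intro s _; ring
    rw [ellF, ellF]
    rw [← hc0]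
    linarith [h1]
  -- sum shifts by δ
  have hsum : ∑ j ∈ Finset.Icc 1 r, truncF n g r x j = (∑ j ∈ Finset.Icc 1 r, x j) - δ := by
    have h := hdiff 1 (by omega)
    rw [Finset.sum_sub_distrib] at h
    linarith
  -- folds shift by δ
  have hfoldo : ((Finset.Icc 1 r).filter (fun t => Odd t)).fold max 0 (ellF n g r (truncF n g r x))
      = ((Finset.Icc 1 r).filter (fun t => Odd t)).fold max 0 (ellF n g r x) - δ := by
    rw [Finset.fold_congr (g := fun t => ellF n g r x t - δ)
      (fun t ht => hell t (Finset.mem_filter.mp ht).1)]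
    exact fold_max_shift _ _ δ t1 ht1f ht1v (by linarith)
  have hfolde : ((Finset.Icc 1 r).filter (fun t => Even t)).fold max 0 (ellF n g r (truncF n g r x))
      = ((Finset.Icc 1 r).filter (fun t => Even t)).fold max 0 (ellF n g r x) - δ := by
    rw [Finset.fold_congr (g := fun t => ellF n g r x t - δ)
      (fun t ht => hell t (Finset.mem_filter.mp ht).1)]
    exact fold_max_shift _ _ δ t2 ht2f ht2v (by linarith)
  rw [hF, hF, hfoldo, hfolde, hsum]
  ring
end

section
/- (Suffix Indistinguishability) Let 1 ≤ i < r/2. If x and x' are two i-balanced points of D with x_j = x'_j for all j ≤ i and Σ_{j=1}^{r} x_j = Σ_{j=1}^{r} x'_j, then h*(x) = h*(x') = h(x) = h(x'). -/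
lemma si_gr4 (g r : ℕ) (hg4 : 4 ∣ g) : ((g:ℤ) * (r:ℤ)) / 4 = ((g:ℤ)/4) * r := by
  obtain ⟨G, rfl⟩ := hg4
  push_cast
  rw [show (4:ℤ)*G*r = 4*(G*r) by ring, Int.mul_ediv_cancel_left _ (by norm_num),
    Int.mul_ediv_cancel_left _ (by norm_num)]


lemma si_G4 (g : ℕ) (hg4 : 4 ∣ g) : ((g:ℤ)/4) * 4 = (g:ℤ) :=
  Int.ediv_mul_cancel (by exact_mod_cast hg4)


lemma si_ell_split (n g r : ℕ) (x : ℕ → ℤ) (t : ℕ) (h2 : t ≤ r) :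
    ellF n g r x t = (x t - ((n:ℤ)/2 - (g:ℤ))) + ellF n g r x (t+1) := by
  unfold ellF
  have h : Finset.Icc t r = insert t (Finset.Icc (t+1) r) := by
    ext a; simp [Finset.mem_Icc]; omega
  rw [h, Finset.sum_insert (by simp)]
  ring


lemma si_descend (n g r i : ℕ) (x : ℕ → ℤ) (hbal : iBal g r i x) (hi1 : 1 ≤ i)
    (hhigh : (g:ℤ) ≤ 8 * (x i - ((n:ℤ)/2 - (g:ℤ)))) :
    ∀ t, i ≤ t → t ≤ r → ∃ t', i ≤ t' ∧ t' ≤ i+1 ∧ t' % 2 = t % 2 ∧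
      ellF n g r x t ≤ ellF n g r x t' := by
  intro t
  induction t using Nat.strong_induction_on with
  | _ t ih =>
    intro h1 h2
    by_cases hsmall : t ≤ i + 1
    · exact ⟨t, h1, hsmall, rfl, le_rfl⟩
    · push_neg at hsmall
      obtain ⟨u, rfl⟩ : ∃ u, t = u + 2 := ⟨t - 2, by omega⟩
      have hu : i ≤ u := by omega
      have e1 := si_ell_split n g r x u (by omega)
      have e2 := si_ell_split n g r x (u+1) (by omega)
      have b1 : 8 * (x i - x (u+1)) ≤ (g:ℤ) := (hbal (u+1) (by omega) (by omega)).1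
      have b2 : 8 * (x i - x u) ≤ (g:ℤ) := by
        rcases Nat.eq_or_lt_of_le hu with h | h
        · rw [← h]; simp
        · exact (hbal u h (by omega)).1
      have step : ellF n g r x (u+2) ≤ ellF n g r x u := by
        rw [e1, e2]; linarith
      obtain ⟨t', a1, a2, a3, a4⟩ := ih u (by omega) hu (by omega)
      exact ⟨t', a1, a2, by omega, le_trans step a4⟩


lemma si_low (n g r i : ℕ) (x : ℕ → ℤ) (hbal : iBal g r i x) (hg : 0 < g) (hg4 : 4 ∣ g)
    (hi1 : 1 ≤ i) (hlow : 8 * (x i - ((n:ℤ)/2 - (g:ℤ))) ≤ (g:ℤ)) :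
    ∀ t, i + 1 ≤ t → t ≤ r → ellF n g r x t ≤ 0 := by
  intro t h1 h2
  have hG : ((g:ℤ)/4) * 4 = (g:ℤ) := si_G4 g hg4
  have hGnn : 0 ≤ (g:ℤ)/4 := by positivity
  have hterm : ∀ s ∈ Finset.Icc t r, x s - ((n:ℤ)/2 - (g:ℤ)) ≤ (g:ℤ)/4 := by
    intro s hs
    simp [Finset.mem_Icc] at hs
    have := (hbal s (by omega) (by omega)).2
    linarith
  have hsum := Finset.sum_le_card_nsmul _ _ _ hterm
  rw [Nat.card_Icc, nsmul_eq_mul] at hsum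
  have hcast : ((r + 1 - t : ℕ) : ℤ) = (r:ℤ) + 1 - t := by omega
  rw [hcast] at hsum
  unfold ellF
  rw [si_gr4 g r hg4]
  have ht1 : (1:ℤ) ≤ (t:ℤ) := by exact_mod_cast h1.trans' (by omega)
  nlinarith [mul_nonneg (show (0:ℤ) ≤ (t:ℤ) - 1 by linarith) hGnn]


lemma si_ell_eq (n g r i : ℕ) (x x' : ℕ → ℤ)
    (hagree : ∀ j ∈ Finset.Icc 1 i, x j = x' j)
    (hsum : ∑ j ∈ Finset.Icc 1 r, x j = ∑ j ∈ Finset.Icc 1 r, x' j)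
    (hir : i + 1 ≤ r) :
    ∀ t, 1 ≤ t → t ≤ i + 1 → ellF n g r x t = ellF n g r x' t := by
  intro t h1 h2
  have e1 := Finset.sum_Ico_consecutive x h1 (show t ≤ r + 1 by omega)
  have e2 := Finset.sum_Ico_consecutive x' h1 (show t ≤ r + 1 by omega)
  have e3 : ∑ j ∈ Finset.Ico 1 t, x j = ∑ j ∈ Finset.Ico 1 t, x' j := by
    refine Finset.sum_congr rfl fun j hj => ?_
    simp [Finset.mem_Ico] at hj
    exact hagree j (by simp [Finset.mem_Icc]; omega)
  rw [Finset.Ico_add_one_right_eq_Icc] at e1 e2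
  have e4 : ∑ j ∈ Finset.Icc t r, x j = ∑ j ∈ Finset.Icc t r, x' j := by
    rw [Finset.Ico_add_one_right_eq_Icc] at *
    linarith [hsum]
  unfold ellF
  rw [Finset.sum_sub_distrib, e4, ← Finset.sum_sub_distrib]


lemma si_fold_le (n g r i : ℕ) (x x' : ℕ → ℤ) (P : ℕ → Prop) [DecidablePred P]
    (hP : ∀ a b : ℕ, a % 2 = b % 2 → P a → P b)
    (hg : 0 < g) (hg4 : 4 ∣ g) (hi1 : 1 ≤ i) (hi2 : 2 * i < r)
    (hbal : iBal g r i x)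
    (he : ∀ t, 1 ≤ t → t ≤ i + 1 → ellF n g r x t = ellF n g r x' t) :
    ((Finset.Icc 1 r).filter P).fold max 0 (ellF n g r x) ≤
      ((Finset.Icc 1 r).filter P).fold max 0 (ellF n g r x') := by
  have h0 : (0:ℤ) ≤ ((Finset.Icc 1 r).filter P).fold max 0 (ellF n g r x') :=
    Finset.le_fold_max 0 |>.mpr (Or.inl le_rfl)
  rw [Finset.fold_max_le]
  refine ⟨h0, fun t ht => ?_⟩
  simp only [Finset.mem_filter, Finset.mem_Icc] at ht
  obtain ⟨⟨ht1, ht2⟩, hPt⟩ := ht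
  by_cases hsmall : t ≤ i + 1
  · rw [he t ht1 hsmall]
    exact Finset.le_fold_max _ |>.mpr (Or.inr ⟨t, by
      simp only [Finset.mem_filter, Finset.mem_Icc]; exact ⟨⟨ht1, ht2⟩, hPt⟩, le_rfl⟩)
  · push_neg at hsmall
    rcases le_or_gt (8 * (x i - ((n:ℤ)/2 - (g:ℤ)))) (g:ℤ) with hlow | hhigh
    · exact le_trans (si_low n g r i x hbal hg hg4 hi1 hlow t (by omega) ht2) h0
    · obtain ⟨t', a1, a2, a3, a4⟩ :=
        si_descend n g r i x hbal hi1 (le_of_lt hhigh) t (by omega) ht2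
      calc ellF n g r x t ≤ ellF n g r x t' := a4
        _ = ellF n g r x' t' := he t' (by omega) a2
        _ ≤ _ := Finset.le_fold_max _ |>.mpr (Or.inr ⟨t', by
            simp only [Finset.mem_filter, Finset.mem_Icc]
            exact ⟨⟨by omega, by omega⟩, hP t t' a3.symm hPt⟩, le_rfl⟩)


lemma si_hstar (n g r i : ℕ) (hg : 0 < g) (hg4 : 4 ∣ g)
    (hr : 3 ≤ r) (hrodd : Odd r) (hi1 : 1 ≤ i) (hi2 : 2 * i < r)
    (x : ℕ → ℤ) (hbal : iBal g r i x) :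
    hStarF n g r x = hF n g r x := by
  unfold hStarF
  split_ifs with hxr
  · rfl
  push_neg at hxr
  set T : ℤ := (n:ℤ)/2 - (g:ℤ)/4 with hT
  set δ : ℤ := x r - T with hδdef
  have hδ : 0 < δ := by simp [hδdef]; linarith
  have hG : ((g:ℤ)/4) * 4 = (g:ℤ) := si_G4 g hg4
  have hGnn : 0 ≤ (g:ℤ)/4 := by positivity
  -- splitting off the top coordinate
  have hsplit : ∀ t, t ≤ r → Finset.Icc t r = insert r (Finset.Icc t (r-1)) := by
    intro t ht; ext a; simp [Finset.mem_Icc]; omega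
  have hrnot : ∀ t, r ∉ Finset.Icc t (r-1) := by
    intro t; simp [Finset.mem_Icc]; omega
  have htrunc_r : truncF n g r x r = T := by
    unfold truncF; rw [if_pos rfl, ← hT]; exact min_eq_right (le_of_lt hxr)
  have htrunc_ne : ∀ j, j ≠ r → truncF n g r x j = x j := by
    intro j hj; simp [truncF, hj]
  -- ellF of the truncation
  have hell : ∀ t, t ≤ r →
      ellF n g r (truncF n g r x) t = ellF n g r x t - δ := by
    intro t ht
    unfold ellF
    rw [hsplit t ht, Finset.sum_insert (hrnot t), Finset.sum_insert (hrnot t), htrunc_r]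
    have : ∑ s ∈ Finset.Icc t (r-1), (truncF n g r x s - ((n:ℤ)/2 - g)) =
        ∑ s ∈ Finset.Icc t (r-1), (x s - ((n:ℤ)/2 - g)) := by
      refine Finset.sum_congr rfl fun s hs => ?_
      simp [Finset.mem_Icc] at hs
      rw [htrunc_ne s (by omega)]
    rw [this]; ring
  -- sum of the truncation
  have hsum : ∑ j ∈ Finset.Icc 1 r, truncF n g r x j = (∑ j ∈ Finset.Icc 1 r, x j) - δ := by
    rw [hsplit 1 (by omega), Finset.sum_insert (hrnot 1), Finset.sum_insert (hrnot 1), htrunc_r]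
    have : ∑ s ∈ Finset.Icc 1 (r-1), truncF n g r x s = ∑ s ∈ Finset.Icc 1 (r-1), x s := by
      refine Finset.sum_congr rfl fun s hs => ?_
      simp [Finset.mem_Icc] at hs
      rw [htrunc_ne s (by omega)]
    rw [this]; ring
  -- x s is not much below x r for i ≤ s ≤ r
  have hbelow : ∀ s, i ≤ s → s ≤ r → x r - (g:ℤ)/4 ≤ x s := by
    intro s h1 h2
    have br := (hbal r (by omega) le_rfl).2
    rcases Nat.eq_or_lt_of_le h1 with h | h
    · rw [← h]; linarith
    · have := (hbal s h h2).1
      linarith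
  -- witnesses: δ ≤ ellF at suitable t
  have hwit : ∀ t, i ≤ t → 1 ≤ t → t ≤ r → 2 * t ≤ r + 1 → δ ≤ ellF n g r x t := by
    intro t h1 h2 h3 h4
    have hterm : ∀ s ∈ Finset.Icc t r, δ + 2 * ((g:ℤ)/4) ≤ x s - ((n:ℤ)/2 - (g:ℤ)) := by
      intro s hs
      simp [Finset.mem_Icc] at hs
      have := hbelow s (by omega) hs.2
      simp only [hδdef, hT] at *
      linarith
    have hsum2 := Finset.card_nsmul_le_sum _ _ _ hterm
    rw [Nat.card_Icc, nsmul_eq_mul] at hsum2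
    have hcast : ((r + 1 - t : ℕ) : ℤ) = (r:ℤ) + 1 - t := by omega
    rw [hcast] at hsum2
    unfold ellF
    rw [si_gr4 g r hg4]
    have hK1 : (1:ℤ) ≤ (r:ℤ) + 1 - t := by
      have : (t:ℤ) ≤ r := by exact_mod_cast h3
      linarith
    have hK2 : (1:ℤ) ≤ 2 * ((r:ℤ) + 1 - t) - r := by
      have : (2*t:ℤ) ≤ (r:ℤ) + 1 := by exact_mod_cast h4
      push_cast at this ⊢
      linarith
    nlinarith [mul_nonneg (show (0:ℤ) ≤ (r:ℤ) + 1 - t - 1 by linarith) (le_of_lt hδ),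
      mul_nonneg (show (0:ℤ) ≤ 2 * ((r:ℤ) + 1 - t) - r - 1 by linarith) hGnn]
  -- fold shift lemma
  have hshift : ∀ (S : Finset ℕ), (∀ t ∈ S, t ≤ r) → (∃ t ∈ S, δ ≤ ellF n g r x t) →
      S.fold max 0 (ellF n g r (truncF n g r x)) = S.fold max 0 (ellF n g r x) - δ := by
    intro S hS ⟨t0, ht0, hδt0⟩
    rw [Finset.fold_congr (g := fun t => ellF n g r x t - δ) (fun t ht => hell t (hS t ht))]
    have hfold0 : (0:ℤ) ≤ S.fold max 0 (ellF n g r x) :=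
      Finset.le_fold_max 0 |>.mpr (Or.inl le_rfl)
    apply le_antisymm
    · rw [Finset.fold_max_le]
      constructor
      · have : δ ≤ S.fold max 0 (ellF n g r x) :=
          Finset.le_fold_max _ |>.mpr (Or.inr ⟨t0, ht0, hδt0⟩)
        linarith
      · intro t ht
        have : ellF n g r x t ≤ S.fold max 0 (ellF n g r x) :=
          Finset.le_fold_max _ |>.mpr (Or.inr ⟨t, ht, le_rfl⟩)
        linarith
    · have hB : (0:ℤ) ≤ S.fold max 0 (fun t => ellF n g r x t - δ) :=
        Finset.le_fold_max 0 |>.mpr (Or.inl le_rfl)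
      have : S.fold max 0 (ellF n g r x) ≤ S.fold max 0 (fun t => ellF n g r x t - δ) + δ := by
        rw [Finset.fold_max_le]
        refine ⟨by linarith, fun t ht => ?_⟩
        have : ellF n g r x t - δ ≤ S.fold max 0 (fun t => ellF n g r x t - δ) :=
          Finset.le_fold_max _ |>.mpr (Or.inr ⟨t, ht, le_rfl⟩)
        linarith
      linarith
  -- parity witnesses
  obtain ⟨q, hq⟩ := hrodd
  have hq1 : 1 ≤ q := by omega
  have hiq : i ≤ q := by omega
  have w1 : δ ≤ ellF n g r x q := hwit q hiq (by omega) (by omega) (by omega)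
  have w2 : δ ≤ ellF n g r x (q+1) := hwit (q+1) (by omega) (by omega) (by omega) (by omega)
  have hmemfilt : ∀ (P : ℕ → Prop) [DecidablePred P] (t : ℕ), 1 ≤ t → t ≤ r → P t →
      t ∈ (Finset.Icc 1 r).filter P := by
    intro P _ t a b c; simp [Finset.mem_Icc]; exact ⟨⟨a, b⟩, c⟩
  have hwitO : ∃ t ∈ (Finset.Icc 1 r).filter (fun t => Odd t), δ ≤ ellF n g r x t := by
    rcases Nat.even_or_odd q with hev | hod
    · exact ⟨q+1, hmemfilt _ (q+1) (by omega) (by omega) (Even.add_one hev), w2⟩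
    · exact ⟨q, hmemfilt _ q (by omega) (by omega) hod, w1⟩
  have hwitE : ∃ t ∈ (Finset.Icc 1 r).filter (fun t => Even t), δ ≤ ellF n g r x t := by
    rcases Nat.even_or_odd q with hev | hod
    · exact ⟨q, hmemfilt _ q (by omega) (by omega) hev, w1⟩
    · exact ⟨q+1, hmemfilt _ (q+1) (by omega) (by omega) (Odd.add_one hod), w2⟩
  have hboundO : ∀ t ∈ (Finset.Icc 1 r).filter (fun t => Odd t), t ≤ r := by
    intro t ht; simp [Finset.mem_Icc] at ht; omega
  have hboundE : ∀ t ∈ (Finset.Icc 1 r).filter (fun t => Even t), t ≤ r := by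
    intro t ht; simp [Finset.mem_Icc] at ht; omega
  unfold hF
  rw [hsum, hshift _ hboundO hwitO, hshift _ hboundE hwitE]
  ring

/-- **Suffix Indistinguishability.** For `1 ≤ i < r/2`, two `i`-balanced points
of `D` agreeing on the first `i` coordinates and with equal coordinate sums satisfy
`h*(x) = h*(x') = h(x) = h(x')`. -/
theorem suffix_indistinguishability
    (n g r : ℕ) (hn : 0 < n) (hn2 : 2 ∣ n) (hg : 0 < g) (hg4 : 4 ∣ g)
    (hr : 3 ≤ r) (hrodd : Odd r)
    (i : ℕ) (hi1 : 1 ≤ i) (hi2 : 2 * i < r)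
    (x x' : ℕ → ℤ) (hx : inD n r x) (hx' : inD n r x')
    (hbal : iBal g r i x) (hbal' : iBal g r i x')
    (hagree : ∀ j ∈ Finset.Icc 1 i, x j = x' j)
    (hsum : ∑ j ∈ Finset.Icc 1 r, x j = ∑ j ∈ Finset.Icc 1 r, x' j) :
    hStarF n g r x = hStarF n g r x' ∧
    hStarF n g r x' = hF n g r x ∧
    hF n g r x = hF n g r x' := by
  have hir : i + 1 ≤ r := by omega
  have he : ∀ t, 1 ≤ t → t ≤ i + 1 → ellF n g r x t = ellF n g r x' t :=
    si_ell_eq n g r i x x' hagree hsum hir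
  have he' : ∀ t, 1 ≤ t → t ≤ i + 1 → ellF n g r x' t = ellF n g r x t :=
    fun t a b => (he t a b).symm
  have hagree' : ∀ j ∈ Finset.Icc 1 i, x' j = x j := fun j hj => (hagree j hj).symm
  have hPodd : ∀ a b : ℕ, a % 2 = b % 2 → Odd a → Odd b := by
    intro a b h ha; rw [Nat.odd_iff] at *; omega
  have hPeven : ∀ a b : ℕ, a % 2 = b % 2 → Even a → Even b := by
    intro a b h ha; rw [Nat.even_iff] at *; omega
  have hfO : ((Finset.Icc 1 r).filter (fun t => Odd t)).fold max 0 (ellF n g r x) =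
      ((Finset.Icc 1 r).filter (fun t => Odd t)).fold max 0 (ellF n g r x') :=
    le_antisymm (si_fold_le n g r i x x' _ hPodd hg hg4 hi1 hi2 hbal he)
      (si_fold_le n g r i x' x _ hPodd hg hg4 hi1 hi2 hbal' he')
  have hfE : ((Finset.Icc 1 r).filter (fun t => Even t)).fold max 0 (ellF n g r x) =
      ((Finset.Icc 1 r).filter (fun t => Even t)).fold max 0 (ellF n g r x') :=
    le_antisymm (si_fold_le n g r i x x' _ hPeven hg hg4 hi1 hi2 hbal he)
      (si_fold_le n g r i x' x _ hPeven hg hg4 hi1 hi2 hbal' he')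
  have hhh : hF n g r x = hF n g r x' := by
    unfold hF; rw [hsum, hfO, hfE]
  have h1 : hStarF n g r x = hF n g r x :=
    si_hstar n g r i hg hg4 hr hrodd hi1 hi2 x hbal
  have h2 : hStarF n g r x' = hF n g r x' :=
    si_hstar n g r i hg hg4 hr hrodd hi1 hi2 x' hbal'
  exact ⟨by rw [h1, h2, hhh], by rw [h2, hhh], hhh⟩
end

section
/- Let M be the nested matroid on a finite set U defined by a partition P = (P_1,…,P_r) of U with |P_i| = n for all i and nonnegative integer thresholds τ_1,…,τ_r, whose independent sets are the I ⊆ U with Σ_{s=t}^{r} |I ∩ P_s| ≤ Σ_{s=t}^{r} τ_s for all 1 ≤ t ≤ r. For any S ⊆ U with signature x (x_i = |S ∩ P_i|), the rank of S in M—the maximum cardinality of an independent subset of S—equals rk_M(S) = |S| − max(0, max_{1 ≤ a ≤ r} ℓ_a(x)), where ℓ_t(x) = Σ_{s=t}^{r} (x_s − τ_s). -/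
/-! For a signature `y ≤ x` obeying the nested constraints and any `a`,
`Σ y = Σ_{s<a} y_s + Σ_{s≥a} y_s ≤ Σ_{s<a} x_s + Σ_{s≥a} τ_s = Σ x - ℓ_a(x)`, so every independent
subset of `S` has at most `|S| - M_1` elements, where `M_t = max(0, max_{t ≤ a ≤ r} ℓ_a(x))`.
Conversely the greedy signature `y_s = x_s + M_{s+1} - M_s` lies between `0` and `x` (as
`M_s = max(ℓ_s, M_{s+1})` and `ℓ_s = x_s - τ_s + ℓ_{s+1}`) and telescopes to tail sums
`Σ_{s≥t} y_s = Σ_{s≥t} x_s - M_t ≤ Σ_{s≥t} τ_s`; any subset of `S` with this signature is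
independent of size `|S| - M_1`. -/

/-- Independence in the nested matroid defined by a partition `Q 1, …, Q m` and integer
thresholds `σ 1, …, σ m`: a set `I` is independent iff
`Σ_{s=t}^m |I ∩ Q s| ≤ Σ_{s=t}^m σ s` for all `1 ≤ t ≤ m`. -/
def NIndep {α : Type*} [DecidableEq α] (m : ℕ) (Q : ℕ → Finset α) (σ : ℕ → ℤ)
    (I : Finset α) : Prop :=
  ∀ t ∈ Finset.Icc 1 m,
    (∑ s ∈ Finset.Icc t m, ((I ∩ Q s).card : ℤ)) ≤ ∑ s ∈ Finset.Icc t m, σ s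

/-- The rank of `S` with respect to an independence predicate: the maximum cardinality of
an independent subset of `S`. -/
noncomputable def nrank {α : Type*} (pred : Finset α → Prop) (S : Finset α) : ℕ :=
  sSup {c : ℕ | ∃ I : Finset α, I ⊆ S ∧ pred I ∧ I.card = c}

/-- `B` is a base (maximal independent set) for the independence predicate `pred`. -/
def IsNBase {α : Type*} (pred : Finset α → Prop) (B : Finset α) : Prop :=
  pred B ∧ ∀ B' : Finset α, pred B' → B ⊆ B' → B' = B

open Finset

lemma sum_Ico_add_sum_Icc {M : Type*} [AddCommMonoid M] (f : ℕ → M) {m a n : ℕ} (hma : m ≤ a)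
    (han : a ≤ n + 1) : ∑ s ∈ Ico m a, f s + ∑ s ∈ Icc a n, f s = ∑ s ∈ Icc m n, f s := by
  rw [← Ico_add_one_right_eq_Icc, ← Ico_add_one_right_eq_Icc]
  exact sum_Ico_consecutive f hma han

section Partition

variable {ι α : Type*} [DecidableEq α] {s : Finset ι} {P : ι → Finset α}

lemma card_eq_sum_card_inter (hP : (s : Set ι).PairwiseDisjoint P) {T : Finset α}
    (hT : T ⊆ s.biUnion P) : T.card = ∑ i ∈ s, (T ∩ P i).card := by
  rw [← card_biUnion (hP.mono fun _ => inter_subset_right), ← inter_biUnion,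
    inter_eq_left.mpr hT]

lemma exists_subset_card_inter_eq (hP : (s : Set ι).PairwiseDisjoint P) {S : Finset α}
    {c : ι → ℕ} (hc : ∀ i ∈ s, c i ≤ (S ∩ P i).card) :
    ∃ I ⊆ S, ∀ i ∈ s, (I ∩ P i).card = c i := by
  have hpiece : ∀ i, ∃ T ⊆ S ∩ P i, i ∈ s → T.card = c i := fun i => by
    by_cases hi : i ∈ s
    · obtain ⟨T, hT, hTc⟩ := exists_subset_card_eq (hc i hi)
      exact ⟨T, hT, fun _ => hTc⟩
    · exact ⟨∅, empty_subset _, fun h => absurd h hi⟩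
  choose T hTS hTc using hpiece
  refine ⟨s.biUnion T, biUnion_subset.mpr fun i _ => (hTS i).trans inter_subset_left,
    fun i hi => ?_⟩
  suffices s.biUnion T ∩ P i = T i by rw [this, hTc i hi]
  ext a
  simp only [mem_inter, mem_biUnion]
  constructor
  · rintro ⟨⟨j, hj, haj⟩, hai⟩
    obtain rfl : j = i := hP.elim_finset hj hi a (mem_inter.mp (hTS j haj)).2 hai
    exact haj
  · exact fun ha => ⟨⟨i, hi, ha⟩, (mem_inter.mp (hTS i ha)).2⟩

end Partition

namespace NestedMatroid

section Signature

variable (r : ℕ) (x τ : ℕ → ℤ)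

/-- The paper's `ℓ_a(x)`. -/
def tailExcess (a : ℕ) : ℤ := ∑ s ∈ Icc a r, (x s - τ s)

/-- `M_t = max(0, max_{t ≤ a ≤ r} ℓ_a(x))`. -/
def maxTailExcess (t : ℕ) : ℤ := (Icc t r).fold max 0 (tailExcess r x τ)

variable {r x τ}

lemma tailExcess_of_lt {t : ℕ} (h : r < t) : tailExcess r x τ t = 0 := by
  simp [tailExcess, Icc_eq_empty_of_lt h]

lemma maxTailExcess_of_lt {t : ℕ} (h : r < t) : maxTailExcess r x τ t = 0 := by
  simp [maxTailExcess, Icc_eq_empty_of_lt h]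

lemma tailExcess_eq_add {t : ℕ} (h : t ≤ r) :
    tailExcess r x τ t = x t - τ t + tailExcess r x τ (t + 1) := by
  rw [tailExcess, ← insert_Icc_add_one_left_eq_Icc h, sum_insert (by simp), tailExcess]

lemma maxTailExcess_eq_max {t : ℕ} (h : t ≤ r) :
    maxTailExcess r x τ t = max (tailExcess r x τ t) (maxTailExcess r x τ (t + 1)) := by
  rw [maxTailExcess, ← insert_Icc_add_one_left_eq_Icc h, fold_insert (by simp), maxTailExcess]

variable (r x τ) in
lemma tailExcess_le_maxTailExcess (t : ℕ) : tailExcess r x τ t ≤ maxTailExcess r x τ t := by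
  rcases le_or_gt t r with h | h
  · exact (le_fold_max _).mpr (Or.inr ⟨t, mem_Icc.mpr ⟨le_rfl, h⟩, le_rfl⟩)
  · rw [tailExcess_of_lt h, maxTailExcess_of_lt h]

variable (r x τ) in
lemma maxTailExcess_succ_le (t : ℕ) : maxTailExcess r x τ (t + 1) ≤ maxTailExcess r x τ t := by
  rcases le_or_gt t r with h | h
  · exact (maxTailExcess_eq_max h).symm ▸ le_max_right _ _
  · rw [maxTailExcess_of_lt h, maxTailExcess_of_lt (by omega)]

lemma maxTailExcess_sub_succ_le {t : ℕ} (h : t ≤ r) (hx : 0 ≤ x t) (hτ : 0 ≤ τ t) :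
    maxTailExcess r x τ t - maxTailExcess r x τ (t + 1) ≤ x t := by
  have := tailExcess_le_maxTailExcess r x τ (t + 1)
  rw [maxTailExcess_eq_max h, tailExcess_eq_add h]
  omega

lemma sum_le_sum_sub_maxTailExcess {y : ℕ → ℤ} (hyx : ∀ s ∈ Icc 1 r, y s ≤ x s)
    (hyτ : ∀ t ∈ Icc 1 r, ∑ s ∈ Icc t r, y s ≤ ∑ s ∈ Icc t r, τ s) :
    ∑ s ∈ Icc 1 r, y s ≤ ∑ s ∈ Icc 1 r, x s - maxTailExcess r x τ 1 := by
  suffices maxTailExcess r x τ 1 ≤ ∑ s ∈ Icc 1 r, x s - ∑ s ∈ Icc 1 r, y s by omega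
  refine (fold_max_le _).mpr ⟨by linarith [sum_le_sum hyx], fun a ha => ?_⟩
  obtain ⟨ha1, har⟩ := mem_Icc.mp ha
  have hhead : ∑ s ∈ Ico 1 a, y s ≤ ∑ s ∈ Ico 1 a, x s :=
    sum_le_sum fun s hs => hyx s (Ico_subset_Icc_self.trans (Icc_subset_Icc_right (by omega)) hs)
  have := hyτ a ha
  have := sum_Ico_add_sum_Icc (n := r) x ha1 (by omega)
  have := sum_Ico_add_sum_Icc (n := r) y ha1 (by omega)
  rw [tailExcess, sum_sub_distrib]
  omega

lemma exists_signature_sum_eq (hx : ∀ s ∈ Icc 1 r, 0 ≤ x s) (hτ : ∀ s ∈ Icc 1 r, 0 ≤ τ s) :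
    ∃ y : ℕ → ℤ, (∀ s ∈ Icc 1 r, 0 ≤ y s ∧ y s ≤ x s) ∧
      (∀ t ∈ Icc 1 r, ∑ s ∈ Icc t r, y s ≤ ∑ s ∈ Icc t r, τ s) ∧
      ∑ s ∈ Icc 1 r, y s = ∑ s ∈ Icc 1 r, x s - maxTailExcess r x τ 1 := by
  have htail : ∀ t ≤ r + 1, ∑ s ∈ Icc t r, (x s + (maxTailExcess r x τ (s + 1) -
      maxTailExcess r x τ s)) = ∑ s ∈ Icc t r, x s - maxTailExcess r x τ t := by
    intro t ht
    rw [sum_add_distrib, ← Ico_add_one_right_eq_Icc, sum_Ico_sub _ ht,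
      maxTailExcess_of_lt (Nat.lt_succ_self r), zero_sub, ← sub_eq_add_neg]
  refine ⟨fun s => x s + (maxTailExcess r x τ (s + 1) - maxTailExcess r x τ s),
    fun s hs => ?_, fun t ht => ?_, htail 1 (by omega)⟩
  · have := maxTailExcess_sub_succ_le (mem_Icc.mp hs).2 (hx s hs) (hτ s hs)
    have := maxTailExcess_succ_le r x τ s
    constructor <;> dsimp only <;> omega
  · rw [htail t (by linarith [(mem_Icc.mp ht).2])]
    have := tailExcess_le_maxTailExcess r x τ t
    rw [tailExcess, sum_sub_distrib] at this
    omega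

end Signature

end NestedMatroid

lemma nrank_eq_of_forall_le {α : Type*} {pred : Finset α → Prop} {S : Finset α} {k : ℤ}
    (hex : ∃ I ⊆ S, pred I ∧ (I.card : ℤ) = k) (hle : ∀ I ⊆ S, pred I → (I.card : ℤ) ≤ k) :
    (nrank pred S : ℤ) = k := by
  obtain ⟨I, hIS, hI, rfl⟩ := hex
  suffices nrank pred S = I.card by rw [this]
  refine IsGreatest.csSup_eq ⟨⟨I, hIS, hI, rfl⟩, ?_⟩
  rintro _ ⟨J, hJS, hJ, rfl⟩
  exact_mod_cast hle J hJS hJ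

theorem nested_matroid_rank_general
    {α : Type*} [DecidableEq α]
    (r : ℕ)
    (P : ℕ → Finset α) (τ : ℕ → ℤ)
    (hτ : ∀ i ∈ Finset.Icc 1 r, 0 ≤ τ i)
    (hdisj : ∀ i ∈ Finset.Icc 1 r, ∀ j ∈ Finset.Icc 1 r, i ≠ j → Disjoint (P i) (P j))
    (hcover : ∀ a : α, ∃ i ∈ Finset.Icc 1 r, a ∈ P i)
    (S : Finset α) :
    (nrank (NIndep r P τ) S : ℤ)
      = (S.card : ℤ)
        - (Finset.Icc 1 r).fold max 0
            (fun a => ∑ s ∈ Finset.Icc a r, (((S ∩ P s).card : ℤ) - τ s)) := by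
  have hP : ((Icc 1 r : Finset ℕ) : Set ℕ).PairwiseDisjoint P := hdisj
  have hcard : ∀ T : Finset α, (T.card : ℤ) = ∑ s ∈ Icc 1 r, ((T ∩ P s).card : ℤ) := fun T => by
    rw [card_eq_sum_card_inter hP fun a _ => mem_biUnion.mpr (hcover a), Nat.cast_sum]
  refine nrank_eq_of_forall_le ?_ fun I hIS hI => ?_
  · obtain ⟨y, hyx, hyτ, hysum⟩ := NestedMatroid.exists_signature_sum_eq
      (x := fun s => ((S ∩ P s).card : ℤ)) (fun _ _ => Nat.cast_nonneg _) hτ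
    obtain ⟨I, hIS, hIc⟩ := exists_subset_card_inter_eq hP (c := fun s => (y s).toNat)
      fun s hs => Int.toNat_le.mpr (hyx s hs).2
    have hIy : ∀ s ∈ Icc 1 r, ((I ∩ P s).card : ℤ) = y s := fun s hs => by
      rw [hIc s hs, Int.toNat_of_nonneg (hyx s hs).1]
    refine ⟨I, hIS, fun t ht => ?_, ?_⟩
    · rw [sum_congr rfl fun s hs => hIy s (Icc_subset_Icc_left (mem_Icc.mp ht).1 hs)]
      exact hyτ t ht
    · rw [hcard, hcard S, sum_congr rfl hIy, hysum]
      rfl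
  · rw [hcard, hcard S]
    exact NestedMatroid.sum_le_sum_sub_maxTailExcess
      (fun s _ => by exact_mod_cast card_le_card (inter_subset_inter_right hIS)) hI

/-- The rank of a set `S` in the nested matroid defined by a partition
`P 1, …, P r` (parts of size `n`) and nonnegative thresholds `τ` equals
`|S| − max(0, max_{1 ≤ a ≤ r} ℓ_a(x))`, where `x` is the signature of `S` and
`ℓ_t(x) = Σ_{s=t}^r (x_s − τ_s)`. -/
theorem nested_matroid_rank
    {α : Type*} [Fintype α] [DecidableEq α]
    (r n : ℕ) (hr : 1 ≤ r)
    (P : ℕ → Finset α) (τ : ℕ → ℤ)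
    (hτ : ∀ i ∈ Finset.Icc 1 r, 0 ≤ τ i)
    (hdisj : ∀ i ∈ Finset.Icc 1 r, ∀ j ∈ Finset.Icc 1 r, i ≠ j → Disjoint (P i) (P j))
    (hcover : ∀ a : α, ∃ i ∈ Finset.Icc 1 r, a ∈ P i)
    (hcard : ∀ i ∈ Finset.Icc 1 r, (P i).card = n)
    (S : Finset α) :
    (nrank (NIndep r P τ) S : ℤ)
      = (S.card : ℤ)
        - (Finset.Icc 1 r).fold max 0
            (fun a => ∑ s ∈ Finset.Icc a r, (((S ∩ P s).card : ℤ) - τ s)) :=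
  nested_matroid_rank_general r P τ hτ hdisj hcover S
end

section
/- Let M be the nested matroid on a finite set U defined by a partition (P_1,…,P_r) of U with |P_i| = n_i and integer thresholds τ_1,…,τ_r satisfying 0 ≤ τ_i ≤ n_i for every i. Then the dual matroid M* (whose independent sets are exactly the I ⊆ U such that U ∖ I contains a base of M) is the nested matroid defined by the reversed partition (P_r, P_{r−1}, …, P_2, P_1) and thresholds (n_r − τ_r, n_{r−1} − τ_{r−1}, …, n_1 − τ_1); equivalently, I ⊆ U is independent in M* if and only if Σ_{j=1}^{t} (|I ∩ P_j| − (n_j − τ_j)) ≤ 0 for all 1 ≤ t ≤ r. -/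
open Finset

namespace Finset

variable {α ι : Type*} [DecidableEq α]

theorem card_eq_sum_card_inter {S : Finset ι} {P : ι → Finset α}
    (hdisj : (S : Set ι).PairwiseDisjoint P) {X : Finset α} (hX : ∀ a ∈ X, ∃ i ∈ S, a ∈ P i) :
    #X = ∑ i ∈ S, #(X ∩ P i) := by
  have hX_eq : X = S.biUnion fun i ↦ X ∩ P i := by
    ext a
    simp only [mem_biUnion, mem_inter]
    exact ⟨fun ha ↦ (hX a ha).imp fun i hi ↦ ⟨hi.1, ha, hi.2⟩, fun ⟨_, _, ha, _⟩ ↦ ha⟩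
  conv_lhs => rw [hX_eq]
  exact card_biUnion (hdisj.mono fun _ ↦ inter_subset_right)

theorem exists_subset_card_inter_eq {S : Finset ι} {P : ι → Finset α}
    (hdisj : (S : Set ι).PairwiseDisjoint P) (C : Finset α) (b : ι → ℕ)
    (hb : ∀ i ∈ S, b i ≤ #(C ∩ P i)) : ∃ B ⊆ C, ∀ i ∈ S, #(B ∩ P i) = b i := by
  choose! D hDC hDcard using fun i hi ↦ exists_subset_card_eq (hb i hi)
  refine ⟨S.biUnion D, biUnion_subset.2 fun i hi ↦ (hDC i hi).trans inter_subset_left,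
    fun i hi ↦ ?_⟩
  have hDP : ∀ j ∈ S, D j ⊆ P j := fun j hj ↦ (hDC j hj).trans inter_subset_right
  have hBP : S.biUnion D ∩ P i = D i := by
    ext x
    simp only [mem_inter, mem_biUnion]
    refine ⟨fun ⟨⟨j, hj, hx⟩, hxi⟩ ↦ ?_, fun hx ↦ ⟨⟨i, hi, hx⟩, hDP i hi hx⟩⟩
    obtain rfl : j = i := by_contra fun hji ↦ disjoint_left.1 (hdisj hj hi hji) (hDP j hj hx) hxi
    exact hx
  rw [hBP, hDcard i hi]

theorem sum_card_insert_inter [DecidableEq ι] {S : Finset ι} {P : ι → Finset α} {B : Finset α}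
    {a : α} {j : ι} (ha : a ∉ B) (hP : ∀ i ∈ S, a ∈ P i ↔ i = j) :
    ∑ i ∈ S, #(insert a B ∩ P i) = ∑ i ∈ S, #(B ∩ P i) + if j ∈ S then 1 else 0 := by
  rw [← sum_ite_eq' S j fun _ ↦ 1, ← sum_add_distrib]
  refine sum_congr rfl fun i hi ↦ ?_
  by_cases hai : a ∈ P i
  · rw [insert_inter_of_mem hai, card_insert_of_notMem fun h ↦ ha (mem_inter.1 h).1,
      if_pos ((hP i hi).1 hai)]
  · rw [insert_inter_of_notMem hai, if_neg (mt (hP i hi).2 hai), add_zero]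

theorem sum_Icc_one_add_sum_Icc_succ {M : Type*} [AddCommMonoid M] (f : ℕ → M) {t r : ℕ}
    (h : t ≤ r) : ∑ s ∈ Icc 1 t, f s + ∑ s ∈ Icc (t + 1) r, f s = ∑ s ∈ Icc 1 r, f s := by
  simpa only [← Icc_add_one_left_eq_Ioc, zero_add] using sum_Ioc_consecutive f (Nat.zero_le t) h

end Finset

section SuffixSums

variable {f g : ℕ → ℤ} {r : ℕ}

theorem forall_suffix_sum_le_iff_forall_prefix_sum_le
    (h : ∑ s ∈ Icc 1 r, f s = ∑ s ∈ Icc 1 r, g s) :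
    (∀ t ∈ Icc 1 r, ∑ s ∈ Icc t r, f s ≤ ∑ s ∈ Icc t r, g s) ↔
      ∀ t ≤ r, ∑ s ∈ Icc 1 t, g s ≤ ∑ s ∈ Icc 1 t, f s := by
  have hsplit : ∀ t ≤ r, ∑ s ∈ Icc (t + 1) r, f s ≤ ∑ s ∈ Icc (t + 1) r, g s ↔
      ∑ s ∈ Icc 1 t, g s ≤ ∑ s ∈ Icc 1 t, f s := fun t ht ↦ by
    have := sum_Icc_one_add_sum_Icc_succ f ht
    have := sum_Icc_one_add_sum_Icc_succ g ht
    constructor <;> intro <;> linarith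
  constructor
  · intro hsuf t ht
    rcases ht.lt_or_eq with ht' | rfl
    · exact (hsplit t ht).1 (hsuf (t + 1) (mem_Icc.2 ⟨t.succ_pos, ht'⟩))
    · exact h.ge
  · intro hpre t ht
    obtain ⟨k, rfl⟩ : ∃ k, t = k + 1 := Nat.exists_eq_add_one.2 (mem_Icc.1 ht).1
    exact (hsplit k (by grind)).2 (hpre k (by grind))

theorem exists_lt_forall_suffix_sum_lt
    (hle : ∀ t ∈ Icc 1 r, ∑ s ∈ Icc t r, f s ≤ ∑ s ∈ Icc t r, g s)
    (hlt : ∑ s ∈ Icc 1 r, f s < ∑ s ∈ Icc 1 r, g s) :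
    ∃ j ∈ Icc 1 r, f j < g j ∧ ∀ t ∈ Icc 1 j, ∑ s ∈ Icc t r, f s < ∑ s ∈ Icc t r, g s := by
  classical
  have htight : ∃ k, ∑ s ∈ Icc (k + 1) r, f s = ∑ s ∈ Icc (k + 1) r, g s := ⟨r, by simp⟩
  set j := Nat.find htight
  have hspec : ∑ s ∈ Icc (j + 1) r, f s = ∑ s ∈ Icc (j + 1) r, g s := Nat.find_spec htight
  have hj0 : j ≠ 0 := fun h0 ↦ hlt.ne (by simpa [h0] using hspec)
  have hjr : j ≤ r := Nat.find_min' htight (by simp)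
  have hslack : ∀ t ∈ Icc 1 j, ∑ s ∈ Icc t r, f s < ∑ s ∈ Icc t r, g s := fun t ht ↦ by
    obtain ⟨k, rfl⟩ : ∃ k, t = k + 1 := Nat.exists_eq_add_one.2 (mem_Icc.1 ht).1
    exact (hle _ (by grind)).lt_of_ne (Nat.find_min htight (by grind))
  refine ⟨j, by grind, ?_, hslack⟩
  have hj := hslack j (by grind)
  rw [← add_sum_Ioc_eq_sum_Icc hjr, ← add_sum_Ioc_eq_sum_Icc hjr, ← Icc_add_one_left_eq_Ioc,
    hspec] at hj
  exact lt_of_add_lt_add_right hj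

end SuffixSums

namespace NIndep

variable {α : Type*} [DecidableEq α] {m r : ℕ} {Q P : ℕ → Finset α} {σ τ : ℕ → ℤ}
  {I B : Finset α}

theorem sum_le (h : NIndep m Q σ I) {t : ℕ} (ht : 1 ≤ t) :
    ∑ s ∈ Icc t m, (#(I ∩ Q s) : ℤ) ≤ ∑ s ∈ Icc t m, σ s := by
  by_cases htm : t ≤ m
  · exact h t (mem_Icc.2 ⟨ht, htm⟩)
  · simp [Icc_eq_empty htm]

theorem card_le (hdisj : (Icc 1 r : Set ℕ).PairwiseDisjoint P)
    (hcover : ∀ a, ∃ i ∈ Icc 1 r, a ∈ P i) (h : NIndep r P τ B) :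
    (#B : ℤ) ≤ ∑ s ∈ Icc 1 r, τ s := by
  rw [card_eq_sum_card_inter hdisj fun a _ ↦ hcover a]
  push_cast
  exact h.sum_le le_rfl

theorem insert_of_forall_lt (hdisj : (Icc 1 r : Set ℕ).PairwiseDisjoint P) (h : NIndep r P τ B)
    {j : ℕ} (hj : j ∈ Icc 1 r) {a : α} (ha : a ∈ P j) (haB : a ∉ B)
    (hslack : ∀ t ∈ Icc 1 j, ∑ s ∈ Icc t r, (#(B ∩ P s) : ℤ) < ∑ s ∈ Icc t r, τ s) :
    NIndep r P τ (insert a B) := by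
  intro t ht
  have hP : ∀ i ∈ Icc t r, a ∈ P i ↔ i = j := fun i hi ↦
    ⟨fun hai ↦ by_contra fun hij ↦ disjoint_left.1 (hdisj (by grind) (by grind) hij) hai ha,
      fun hij ↦ hij ▸ ha⟩
  rw [← Nat.cast_sum, sum_card_insert_inter haB hP]
  push_cast
  split_ifs with hjt
  · have := hslack t (mem_Icc.2 ⟨(mem_Icc.1 ht).1, (mem_Icc.1 hjt).1⟩)
    omega
  · simpa using h t ht

theorem exists_insert (hdisj : (Icc 1 r : Set ℕ).PairwiseDisjoint P)
    (hcover : ∀ a, ∃ i ∈ Icc 1 r, a ∈ P i) (hτ : ∀ i ∈ Icc 1 r, τ i ≤ #(P i))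
    (h : NIndep r P τ B) (hlt : (#B : ℤ) < ∑ s ∈ Icc 1 r, τ s) :
    ∃ a ∉ B, NIndep r P τ (insert a B) := by
  rw [card_eq_sum_card_inter hdisj fun a _ ↦ hcover a, Nat.cast_sum] at hlt
  obtain ⟨j, hj, hBj, hslack⟩ := exists_lt_forall_suffix_sum_lt h hlt
  obtain ⟨a, haP, haB⟩ : ∃ a ∈ P j, a ∉ B := by
    by_contra! hPB
    rw [inter_eq_right.2 fun a ha ↦ hPB a ha] at hBj
    exact (hBj.trans_le (hτ j hj)).false
  exact ⟨a, haB, h.insert_of_forall_lt hdisj hj haP haB hslack⟩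

end NIndep

section NestedMatroid

variable {α : Type*} [DecidableEq α] {r : ℕ} {P : ℕ → Finset α} {τ : ℕ → ℤ} {B : Finset α}

theorem isNBase_nIndep_iff (hdisj : (Icc 1 r : Set ℕ).PairwiseDisjoint P)
    (hcover : ∀ a, ∃ i ∈ Icc 1 r, a ∈ P i) (hτ : ∀ i ∈ Icc 1 r, τ i ≤ #(P i)) :
    IsNBase (NIndep r P τ) B ↔ NIndep r P τ B ∧ (#B : ℤ) = ∑ s ∈ Icc 1 r, τ s := by
  refine ⟨fun ⟨hB, hmax⟩ ↦ ⟨hB, (hB.card_le hdisj hcover).eq_of_not_lt fun hlt ↦ ?_⟩,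
    fun ⟨hB, hcard⟩ ↦ ⟨hB, fun B' hB' hBB' ↦ ?_⟩⟩
  · obtain ⟨a, haB, hins⟩ := hB.exists_insert hdisj hcover hτ hlt
    exact haB (hmax _ hins (subset_insert a B) ▸ mem_insert_self a B)
  · have := hB'.card_le hdisj hcover
    exact (eq_of_subset_of_card_le hBB' (by omega)).symm

theorem nIndep_iff_forall_sum_le (hdisj : (Icc 1 r : Set ℕ).PairwiseDisjoint P)
    (hcover : ∀ a, ∃ i ∈ Icc 1 r, a ∈ P i) (hB : (#B : ℤ) = ∑ s ∈ Icc 1 r, τ s) :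
    NIndep r P τ B ↔ ∀ t ≤ r, ∑ s ∈ Icc 1 t, τ s ≤ ∑ s ∈ Icc 1 t, (#(B ∩ P s) : ℤ) :=
  forall_suffix_sum_le_iff_forall_prefix_sum_le <| by
    rw [← hB, card_eq_sum_card_inter hdisj fun a _ ↦ hcover a, Nat.cast_sum]

theorem exists_subset_sum_card_inter_eq_min (hdisj : (Icc 1 r : Set ℕ).PairwiseDisjoint P)
    (C : Finset α) (K : ℕ) :
    ∃ B ⊆ C, ∀ t ≤ r, ∑ s ∈ Icc 1 t, #(B ∩ P s) = min (∑ s ∈ Icc 1 t, #(C ∩ P s)) K := by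
  set Γ : ℕ → ℕ := fun t ↦ ∑ s ∈ Icc 1 t, #(C ∩ P s)
  have hΓ : ∀ t, Γ (t + 1) = Γ t + #(C ∩ P (t + 1)) := fun t ↦
    sum_Icc_succ_top (Nat.le_add_left 1 t) _
  obtain ⟨B, hBC, hB⟩ := exists_subset_card_inter_eq hdisj C
    (fun s ↦ min (Γ s) K - min (Γ (s - 1)) K) fun s hs ↦ by
      obtain ⟨k, rfl⟩ : ∃ k, s = k + 1 := Nat.exists_eq_add_one.2 (mem_Icc.1 hs).1
      have := hΓ k
      simp only [Nat.add_sub_cancel]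
      omega
  refine ⟨B, hBC, fun t ht ↦ ?_⟩
  induction t with
  | zero => simp
  | succ t ih =>
    rw [sum_Icc_succ_top (Nat.le_add_left 1 t), ih (by omega), hB (t + 1) (by simp [ht])]
    have := hΓ t
    simp only [Γ, Nat.add_sub_cancel] at this ⊢
    omega

theorem exists_nIndep_subset_card_eq (hdisj : (Icc 1 r : Set ℕ).PairwiseDisjoint P)
    (hcover : ∀ a, ∃ i ∈ Icc 1 r, a ∈ P i) (hτ : ∀ i ∈ Icc 1 r, 0 ≤ τ i) {C : Finset α}
    (hC : ∀ t ≤ r, ∑ s ∈ Icc 1 t, τ s ≤ ∑ s ∈ Icc 1 t, (#(C ∩ P s) : ℤ)) :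
    ∃ B ⊆ C, NIndep r P τ B ∧ (#B : ℤ) = ∑ s ∈ Icc 1 r, τ s := by
  obtain ⟨K, hK⟩ := Int.eq_ofNat_of_zero_le (sum_nonneg hτ)
  obtain ⟨B, hBC, hB⟩ := exists_subset_sum_card_inter_eq_min hdisj C K
  have hcard : (#B : ℤ) = ∑ s ∈ Icc 1 r, τ s := by
    have := hC r le_rfl
    rw [card_eq_sum_card_inter hdisj fun a _ ↦ hcover a, hB r le_rfl, hK]
    rw [hK] at this
    push_cast at this ⊢
    exact min_eq_right this
  refine ⟨B, hBC, (nIndep_iff_forall_sum_le hdisj hcover hcard).2 fun t ht ↦ ?_, hcard⟩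
  have hτK : ∑ s ∈ Icc 1 t, τ s ≤ K :=
    hK ▸ sum_le_sum_of_subset_of_nonneg (Icc_subset_Icc_right ht) fun i hi _ ↦ hτ i hi
  rw [← Nat.cast_sum, hB t ht, Nat.cast_min, le_min_iff, Nat.cast_sum]
  exact ⟨hC t ht, hτK⟩

theorem exists_isNBase_subset_iff (hdisj : (Icc 1 r : Set ℕ).PairwiseDisjoint P)
    (hcover : ∀ a, ∃ i ∈ Icc 1 r, a ∈ P i) (hτ : ∀ i ∈ Icc 1 r, 0 ≤ τ i ∧ τ i ≤ #(P i))
    (C : Finset α) :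
    (∃ B, IsNBase (NIndep r P τ) B ∧ B ⊆ C) ↔
      ∀ t ≤ r, ∑ s ∈ Icc 1 t, τ s ≤ ∑ s ∈ Icc 1 t, (#(C ∩ P s) : ℤ) := by
  simp only [isNBase_nIndep_iff hdisj hcover fun i hi ↦ (hτ i hi).2]
  constructor
  · rintro ⟨B, ⟨hB, hcard⟩, hBC⟩ t ht
    calc ∑ s ∈ Icc 1 t, τ s ≤ ∑ s ∈ Icc 1 t, (#(B ∩ P s) : ℤ) :=
          (nIndep_iff_forall_sum_le hdisj hcover hcard).1 hB t ht
      _ ≤ ∑ s ∈ Icc 1 t, (#(C ∩ P s) : ℤ) := by gcongr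
  · intro hC
    obtain ⟨B, hBC, hB, hcard⟩ :=
      exists_nIndep_subset_card_eq hdisj hcover (fun i hi ↦ (hτ i hi).1) hC
    exact ⟨B, ⟨hB, hcard⟩, hBC⟩

end NestedMatroid

theorem nested_matroid_dual_general
    {α : Type*} [Fintype α] [DecidableEq α]
    (r : ℕ)
    (P : ℕ → Finset α) (nvec : ℕ → ℕ) (τ : ℕ → ℤ)
    (hdisj : ∀ i ∈ Finset.Icc 1 r, ∀ j ∈ Finset.Icc 1 r, i ≠ j → Disjoint (P i) (P j))
    (hcover : ∀ a : α, ∃ i ∈ Finset.Icc 1 r, a ∈ P i)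
    (hcard : ∀ i ∈ Finset.Icc 1 r, (P i).card = nvec i)
    (hτ : ∀ i ∈ Finset.Icc 1 r, 0 ≤ τ i ∧ τ i ≤ (nvec i : ℤ))
    (I : Finset α) :
    (∃ B : Finset α, IsNBase (NIndep r P τ) B ∧ B ⊆ Finset.univ \ I)
      ↔
    (∀ t ∈ Finset.Icc 1 r,
      (∑ j ∈ Finset.Icc 1 t, (((I ∩ P j).card : ℤ) - ((nvec j : ℤ) - τ j))) ≤ 0) := by
  rw [exists_isNBase_subset_iff (fun i hi j hj ↦ hdisj i hi j hj) hcover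
    (fun i hi ↦ hcard i hi ▸ hτ i hi)]
  have hcompl : ∀ t ≤ r, ∑ j ∈ Icc 1 t, (#((univ \ I) ∩ P j) : ℤ) =
      ∑ j ∈ Icc 1 t, ((nvec j : ℤ) - #(I ∩ P j)) := fun t ht ↦ sum_congr rfl fun j hj ↦ by
    rw [← hcard j (Icc_subset_Icc_right ht hj), ← card_sdiff_add_card_inter (P j) I]
    simp [sdiff_eq_inter_compl, inter_comm]
  simp only [sum_sub_distrib] at hcompl ⊢
  constructor
  · intro h t ht
    have := h t (mem_Icc.1 ht).2
    rw [hcompl t (mem_Icc.1 ht).2] at this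
    linarith
  · intro h t ht
    rcases t.eq_zero_or_pos with rfl | ht0
    · simp
    have := h t (mem_Icc.2 ⟨ht0, ht⟩)
    rw [hcompl t ht]
    linarith

/-- The dual of the nested matroid defined by a partition
`P 1, …, P r` (with `|P i| = nvec i`) and thresholds `0 ≤ τ i ≤ nvec i` is the nested
matroid on the reversed partition with thresholds `nvec i − τ i`; equivalently, `I` is
independent in the dual iff `Σ_{j=1}^t (|I ∩ P j| − (nvec j − τ j)) ≤ 0` for all `1 ≤ t ≤ r`. -/
theorem nested_matroid_dual
    {α : Type*} [Fintype α] [DecidableEq α]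
    (r : ℕ) (hr : 1 ≤ r)
    (P : ℕ → Finset α) (nvec : ℕ → ℕ) (τ : ℕ → ℤ)
    (hdisj : ∀ i ∈ Finset.Icc 1 r, ∀ j ∈ Finset.Icc 1 r, i ≠ j → Disjoint (P i) (P j))
    (hcover : ∀ a : α, ∃ i ∈ Finset.Icc 1 r, a ∈ P i)
    (hcard : ∀ i ∈ Finset.Icc 1 r, (P i).card = nvec i)
    (hτ : ∀ i ∈ Finset.Icc 1 r, 0 ≤ τ i ∧ τ i ≤ (nvec i : ℤ))
    (I : Finset α) :
    (∃ B : Finset α, IsNBase (NIndep r P τ) B ∧ B ⊆ Finset.univ \ I)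
      ↔
    (∀ t ∈ Finset.Icc 1 r,
      (∑ j ∈ Finset.Icc 1 t, (((I ∩ P j).card : ℤ) - ((nvec j : ℤ) - τ j))) ≤ 0) :=
  nested_matroid_dual_general r P nvec τ hdisj hcover hcard hτ I
end

section
/- For every subset S ⊆ U with signature x with respect to the partition P = (P_1,…,P_r), the rank of S in M_odd satisfies rk_{M_odd}(S) = Σ_{i=1}^{r} x_i − max(0, max_{odd a, 1 ≤ a ≤ r} ℓ_a(x)). -/
/-- The thresholds `τ_1 = ⋯ = τ_{r−1} = n/2 − g` and `τ_r = n/2 − g + gr/4`, for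
`r = 2k+1`. -/
def tauF (n g k : ℕ) : ℕ → ℤ :=
  fun t => if t = 2 * k + 1 then (n : ℤ) / 2 - (g : ℤ) + ((g : ℤ) * (2 * (k : ℤ) + 1)) / 4
    else (n : ℤ) / 2 - (g : ℤ)

/-- `θ = n/2 − g/4`. -/
def thetaF (n g : ℕ) : ℤ := (n : ℤ) / 2 - (g : ℤ) / 4

/-- `ℓ_t(x) = Σ_{s=t}^{2k+1} (x_s − τ_s)`. -/
def ellT (n g k : ℕ) (x : ℕ → ℤ) (t : ℕ) : ℤ :=
  ∑ s ∈ Finset.Icc t (2 * k + 1), (x s - tauF n g k s)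

/-- The signature of `S` with respect to the partition `P`. -/
def sigF {α : Type*} [DecidableEq α] (P : ℕ → Finset α) (S : Finset α) : ℕ → ℤ :=
  fun j => ((S ∩ P j).card : ℤ)

/-- The partition of `M_odd`: `(P_1 ∪ P_2, P_3 ∪ P_4, …, P_{r−2} ∪ P_{r−1}, P_r)`,
indexed `1, …, k+1`. -/
def QoddF {α : Type*} [DecidableEq α] (P : ℕ → Finset α) (k : ℕ) : ℕ → Finset α :=
  fun j => if j ≤ k then P (2 * j - 1) ∪ P (2 * j) else P (2 * k + 1)

/-- The thresholds of `M_odd`: `(τ_1 + τ_2, τ_3 + τ_4, …, τ_{r−2} + τ_{r−1}, τ_r)`. -/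
def soddF (n g k : ℕ) : ℕ → ℤ :=
  fun j => if j ≤ k then tauF n g k (2 * j - 1) + tauF n g k (2 * j)
    else tauF n g k (2 * k + 1)

/-- The partition of `M_even`: `(P_1, P_2 ∪ P_3, P_4 ∪ P_5, …, P_{r−1} ∪ P_r)`,
indexed `1, …, k+1`. -/
def QevenF {α : Type*} [DecidableEq α] (P : ℕ → Finset α) (k : ℕ) : ℕ → Finset α :=
  fun j => if j = 1 then P 1 else P (2 * j - 2) ∪ P (2 * j - 1)

/-- The thresholds of `M_even`: `(n, τ_2 + τ_3, τ_4 + τ_5, …, τ_{r−1} + τ_r)`. -/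
def sevenF (n g k : ℕ) : ℕ → ℤ :=
  fun j => if j = 1 then (n : ℤ) else tauF n g k (2 * j - 2) + tauF n g k (2 * j - 1)

/-- The partition of `M'_even`:
`(P_1, P_2 ∪ P_3, …, P_{r−3} ∪ P_{r−2}, P_{r−1}, P_r)`, indexed `1, …, k+2`. -/
def QevenF' {α : Type*} [DecidableEq α] (P : ℕ → Finset α) (k : ℕ) : ℕ → Finset α :=
  fun j => if j = 1 then P 1
    else if j ≤ k then P (2 * j - 2) ∪ P (2 * j - 1)
    else if j = k + 1 then P (2 * k)
    else P (2 * k + 1)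

/-- The thresholds of `M'_even`:
`(n, τ_2 + τ_3, …, τ_{r−3} + τ_{r−2}, τ_{r−1} + τ_r − θ, θ)`. -/
def sevenF' (n g k : ℕ) : ℕ → ℤ :=
  fun j => if j = 1 then (n : ℤ)
    else if j ≤ k then tauF n g k (2 * j - 2) + tauF n g k (2 * j - 1)
    else if j = k + 1 then tauF n g k (2 * k) + tauF n g k (2 * k + 1) - thetaF n g
    else thetaF n g

private lemma pairSum (f : ℕ → ℤ) : ∀ (K t : ℕ), 1 ≤ t → t ≤ K + 1 →
    ∑ i ∈ Finset.Icc (2*t-1) (2*K), f i = ∑ j ∈ Finset.Icc t K, (f (2*j-1) + f (2*j)) := by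
  intro K
  induction K with
  | zero =>
    intro t h1 h2
    have : t = 1 := by omega
    subst this; simp
  | succ K ih =>
    intro t h1 h2
    rcases Nat.eq_or_lt_of_le h2 with he | hl
    · have e1 : Finset.Icc (2*t-1) (2*(K+1)) = ∅ := Finset.Icc_eq_empty (by omega)
      have e2 : Finset.Icc t (K+1) = ∅ := Finset.Icc_eq_empty (by omega)
      rw [e1, e2]; simp
    · have ht : t ≤ K + 1 := by omega
      have h2K : 2*(K+1) = (2*K+1)+1 := by ring
      rw [h2K, Finset.sum_Icc_succ_top (by omega), Finset.sum_Icc_succ_top (by omega : 2*t-1 ≤ 2*K+1),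
        Finset.sum_Icc_succ_top ht, ih t h1 ht]
      have e3 : 2*(K+1)-1 = 2*K+1 := by omega
      have e4 : (2*K+1)+1 = 2*(K+1) := by ring
      rw [e3, e4]; ring

private lemma Icc_split (a b c : ℕ) (h1 : a ≤ b+1) (h2 : b ≤ c) (f : ℕ → ℤ) :
    ∑ i ∈ Finset.Icc a c, f i = ∑ i ∈ Finset.Icc a b, f i + ∑ i ∈ Finset.Icc (b+1) c, f i := by
  rw [← Finset.sum_union (by rw [Finset.disjoint_left]; intro x hx hx'; simp [Finset.mem_Icc] at hx hx'; omega)]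
  congr 1
  ext x; simp only [Finset.mem_Icc, Finset.mem_union]; omega


private def Fg (m : ℕ) (y σ : ℕ → ℤ) (j t : ℕ) : ℤ :=
  (∑ s ∈ Finset.Icc j (t-1), y s) + ∑ s ∈ Finset.Icc t m, σ s

private def Wg (m : ℕ) (y σ : ℕ → ℤ) (j : ℕ) : ℤ :=
  (insert (m+1) (Finset.Icc j m)).inf' (Finset.insert_nonempty _ _) (Fg m y σ j)

private lemma Wg_top (m : ℕ) (y σ : ℕ → ℤ) : Wg m y σ (m+1) = 0 := by
  have h : Finset.Icc (m+1) m = ∅ := Finset.Icc_eq_empty (by omega)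
  simp [Wg, Fg, h]

private lemma Wg_succ_le (m : ℕ) (y σ : ℕ → ℤ) (hy : ∀ j ∈ Finset.Icc 1 m, 0 ≤ y j)
    (hσ : ∀ j ∈ Finset.Icc 1 m, 0 ≤ σ j) (j : ℕ) (hj : j ∈ Finset.Icc 1 m) :
    Wg m y σ (j+1) ≤ Wg m y σ j := by
  simp only [Finset.mem_Icc] at hj
  apply Finset.le_inf'
  intro t ht
  simp only [Finset.mem_insert, Finset.mem_Icc] at ht
  by_cases htj : t = j
  · subst htj
    have e1 : Finset.Icc t (t-1) = ∅ := Finset.Icc_eq_empty (by omega)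
    have e2 : Finset.Icc t m = insert t (Finset.Icc (t+1) m) := by
      ext x; simp only [Finset.mem_Icc, Finset.mem_insert]; omega
    have e3 : Finset.Icc (t+1) ((t+1)-1) = ∅ := Finset.Icc_eq_empty (by omega)
    have hnot : t ∉ Finset.Icc (t+1) m := by rw [Finset.mem_Icc]; omega
    have key : Fg m y σ t t = σ t + Fg m y σ (t+1) (t+1) := by
      simp only [Fg]
      rw [e1, e3, e2, Finset.sum_insert hnot, Finset.sum_empty]
      ring
    rw [key]
    have h1 : Wg m y σ (t+1) ≤ Fg m y σ (t+1) (t+1) := by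
      apply Finset.inf'_le
      simp only [Finset.mem_insert, Finset.mem_Icc]; omega
    have h2 : 0 ≤ σ t := hσ t (by simp only [Finset.mem_Icc]; omega)
    linarith
  · have htj1 : j + 1 ≤ t := by omega
    have e : Finset.Icc j (t-1) = insert j (Finset.Icc (j+1) (t-1)) := by
      ext x; simp only [Finset.mem_Icc, Finset.mem_insert]; omega
    have hnot : j ∉ Finset.Icc (j+1) (t-1) := by rw [Finset.mem_Icc]; omega
    have key : Fg m y σ j t = y j + Fg m y σ (j+1) t := by
      simp only [Fg]
      rw [e, Finset.sum_insert hnot]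
      ring
    rw [key]
    have h1 : Wg m y σ (j+1) ≤ Fg m y σ (j+1) t := by
      apply Finset.inf'_le
      simp only [Finset.mem_insert, Finset.mem_Icc]; omega
    have h2 : 0 ≤ y j := hy j (by simp only [Finset.mem_Icc]; omega)
    linarith

private lemma Wg_le_add (m : ℕ) (y σ : ℕ → ℤ) (j : ℕ) (hj : j ∈ Finset.Icc 1 m) :
    Wg m y σ j ≤ y j + Wg m y σ (j+1) := by
  simp only [Finset.mem_Icc] at hj
  obtain ⟨t, ht, hW⟩ := Finset.exists_mem_eq_inf'
    (Finset.insert_nonempty (m+1) (Finset.Icc (j+1) m)) (Fg m y σ (j+1))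
  have hW' : Wg m y σ (j+1) = Fg m y σ (j+1) t := hW
  simp only [Finset.mem_insert, Finset.mem_Icc] at ht
  have hmem : t ∈ insert (m+1) (Finset.Icc j m) := by
    simp only [Finset.mem_insert, Finset.mem_Icc]; omega
  have h1 : Wg m y σ j ≤ Fg m y σ j t := Finset.inf'_le _ hmem
  have e : Finset.Icc j (t-1) = insert j (Finset.Icc (j+1) (t-1)) := by
    ext x; simp only [Finset.mem_Icc, Finset.mem_insert]; omega
  have hnot : j ∉ Finset.Icc (j+1) (t-1) := by rw [Finset.mem_Icc]; omega
  have key : Fg m y σ j t = y j + Fg m y σ (j+1) t := by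
    simp only [Fg]
    rw [e, Finset.sum_insert hnot]
    ring
  rw [key] at h1
  linarith [hW'.ge]

private lemma Wg_le_sigma (m : ℕ) (y σ : ℕ → ℤ) (j : ℕ) (hj : j ∈ Finset.Icc 1 m) :
    Wg m y σ j ≤ ∑ s ∈ Finset.Icc j m, σ s := by
  simp only [Finset.mem_Icc] at hj
  have h : Wg m y σ j ≤ Fg m y σ j j := by
    apply Finset.inf'_le
    simp only [Finset.mem_insert, Finset.mem_Icc]; omega
  have e : Finset.Icc j (j-1) = ∅ := Finset.Icc_eq_empty (by omega)
  simpa [Fg, e] using h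

private lemma telescope (f : ℕ → ℤ) (a : ℕ) : ∀ b, a ≤ b + 1 →
    ∑ j ∈ Finset.Icc a b, (f j - f (j+1)) = f a - f (b+1) := by
  intro b
  induction b with
  | zero =>
    intro h
    interval_cases a
    · simp
    · simp
  | succ b ih =>
    intro h
    rcases Nat.lt_or_ge b (a - 1) with h2 | h2
    · have he : a = b + 2 := by omega
      have : Finset.Icc a (b+1) = ∅ := Finset.Icc_eq_empty (by omega)
      rw [this, he]; simp
    · rw [Finset.sum_Icc_succ_top (by omega), ih (by omega)]; ring

private lemma Wg_tel (m : ℕ) (y σ : ℕ → ℤ) (t : ℕ) (h2 : t ≤ m + 1) :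
    ∑ j ∈ Finset.Icc t m, (Wg m y σ j - Wg m y σ (j+1)) = Wg m y σ t := by
  rw [telescope (Wg m y σ) t m h2, Wg_top]; ring

private lemma Wg_one (m : ℕ) (hm : 1 ≤ m) (y σ : ℕ → ℤ) :
    Wg m y σ 1 = (∑ j ∈ Finset.Icc 1 m, y j)
      - max 0 ((Finset.Icc 1 m).sup' (Finset.nonempty_Icc.mpr hm)
          (fun t => ∑ s ∈ Finset.Icc t m, (y s - σ s))) := by
  set L : ℕ → ℤ := fun t => ∑ s ∈ Finset.Icc t m, (y s - σ s) with hL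
  set c : ℤ := ∑ j ∈ Finset.Icc 1 m, y j with hc
  have hF : ∀ t ∈ insert (m+1) (Finset.Icc 1 m), Fg m y σ 1 t = c - L t := by
    intro t ht
    simp only [Finset.mem_insert, Finset.mem_Icc] at ht
    have h1 : 1 ≤ t := by omega
    have h2 : t ≤ m + 1 := by omega
    have hsplit : c = ∑ i ∈ Finset.Icc 1 (t-1), y i + ∑ i ∈ Finset.Icc t m, y i := by
      rw [hc]
      have := Icc_split 1 (t-1) m (by omega) (by omega) y
      rwa [show t - 1 + 1 = t by omega] at this
    simp only [Fg, hL, Finset.sum_sub_distrib]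
    rw [hsplit]; ring
  have hsup : (insert (m+1) (Finset.Icc 1 m)).sup'
      (Finset.insert_nonempty _ _) L = max 0 ((Finset.Icc 1 m).sup' (Finset.nonempty_Icc.mpr hm) L) := by
    rw [Finset.sup'_insert]
    have : L (m+1) = 0 := by
      simp [hL, Finset.Icc_eq_empty (show ¬ (m+1 ≤ m) by omega)]
    rw [this]
  have key : Wg m y σ 1 = c - (insert (m+1) (Finset.Icc 1 m)).sup' (Finset.insert_nonempty _ _) L := by
    apply le_antisymm
    · obtain ⟨t, ht, hWt⟩ := Finset.exists_mem_eq_sup'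
        (Finset.insert_nonempty (m+1) (Finset.Icc 1 m)) L
      rw [hWt]
      calc Wg m y σ 1 ≤ Fg m y σ 1 t := Finset.inf'_le _ ht
        _ = c - L t := hF t ht
    · apply Finset.le_inf'
      intro t ht
      rw [hF t ht]
      have : L t ≤ _ := Finset.le_sup' L ht
      linarith
  rw [key, hsup]

private lemma nested_rank {α : Type*} [DecidableEq α] (m : ℕ) (Q : ℕ → Finset α) (σ : ℕ → ℤ)
    (hdisj : ∀ i ∈ Finset.Icc 1 m, ∀ j ∈ Finset.Icc 1 m, i ≠ j → Disjoint (Q i) (Q j))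
    (hσ : ∀ j ∈ Finset.Icc 1 m, 0 ≤ σ j)
    (S : Finset α) (hS : ∀ a ∈ S, ∃ j ∈ Finset.Icc 1 m, a ∈ Q j) :
    (nrank (NIndep m Q σ) S : ℤ) = Wg m (fun j => ((S ∩ Q j).card : ℤ)) σ 1 := by
  classical
  set y : ℕ → ℤ := fun j => ((S ∩ Q j).card : ℤ) with hy_def
  have hy : ∀ j ∈ Finset.Icc 1 m, 0 ≤ y j := fun j _ => Int.natCast_nonneg _
  set z : ℕ → ℤ := fun j => Wg m y σ j - Wg m y σ (j+1) with hz_def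
  have hz0 : ∀ j ∈ Finset.Icc 1 m, 0 ≤ z j := fun j hj =>
    sub_nonneg.mpr (Wg_succ_le m y σ hy hσ j hj)
  have hzy : ∀ j ∈ Finset.Icc 1 m, z j ≤ y j := by
    intro j hj
    have := Wg_le_add m y σ j hj
    simp only [hz_def]
    linarith
  -- choose subsets
  have hex : ∀ j : ℕ, ∃ T : Finset α, T ⊆ S ∩ Q j ∧
      T.card = if j ∈ Finset.Icc 1 m then (z j).toNat else 0 := by
    intro j
    by_cases hj : j ∈ Finset.Icc 1 m
    · have hle : (z j).toNat ≤ (S ∩ Q j).card := Int.toNat_le.mpr (hzy j hj)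
      obtain ⟨T, hT1, hT2⟩ := Finset.exists_subset_card_eq hle
      exact ⟨T, hT1, by simp [hj, hT2]⟩
    · exact ⟨∅, by simp, by simp [hj]⟩
  choose T hT1 hT2 using hex
  set I : Finset α := (Finset.Icc 1 m).biUnion T with hI_def
  have hIS : I ⊆ S := by
    rw [hI_def]
    exact Finset.biUnion_subset.mpr fun j _ => (hT1 j).trans Finset.inter_subset_left
  have hTQ : ∀ j, T j ⊆ Q j := fun j => (hT1 j).trans Finset.inter_subset_right
  have hTdisj : ∀ i ∈ Finset.Icc 1 m, ∀ j ∈ Finset.Icc 1 m, i ≠ j → Disjoint (T i) (T j) :=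
    fun i hi j hj hij => (hdisj i hi j hj hij).mono (hTQ i) (hTQ j)
  have hIQ : ∀ s ∈ Finset.Icc 1 m, I ∩ Q s = T s := by
    intro s hs
    ext a
    simp only [hI_def, Finset.mem_inter, Finset.mem_biUnion]
    constructor
    · rintro ⟨⟨j, hj, haj⟩, haq⟩
      by_cases hjs : j = s
      · exact hjs ▸ haj
      · exact absurd haq (Finset.disjoint_left.mp (hdisj j hj s hs hjs) (hTQ j haj))
    · intro ha
      exact ⟨⟨s, hs, ha⟩, hTQ s ha⟩
  have hcardTz : ∀ s ∈ Finset.Icc 1 m, ((T s).card : ℤ) = z s := by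
    intro s hs
    rw [hT2 s, if_pos hs]
    exact Int.toNat_of_nonneg (hz0 s hs)
  have hIndep : NIndep m Q σ I := by
    intro t ht
    have htm : t ≤ m := (Finset.mem_Icc.mp ht).2
    calc ∑ s ∈ Finset.Icc t m, ((I ∩ Q s).card : ℤ)
        = ∑ s ∈ Finset.Icc t m, z s := by
          apply Finset.sum_congr rfl
          intro s hs
          simp only [Finset.mem_Icc] at hs ht
          have hs' : s ∈ Finset.Icc 1 m := Finset.mem_Icc.mpr ⟨by omega, hs.2⟩
          rw [hIQ s hs', hcardTz s hs']
      _ = Wg m y σ t := Wg_tel m y σ t (by omega)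
      _ ≤ ∑ s ∈ Finset.Icc t m, σ s := Wg_le_sigma m y σ t ht
  have hIcard : (I.card : ℤ) = Wg m y σ 1 := by
    rw [hI_def, Finset.card_biUnion hTdisj]
    push_cast
    rw [Finset.sum_congr rfl hcardTz]
    exact Wg_tel m y σ 1 (by omega)
  -- upper bound
  have hub : ∀ J : Finset α, J ⊆ S → NIndep m Q σ J → (J.card : ℤ) ≤ Wg m y σ 1 := by
    intro J hJS hInd
    have hJeq : J = (Finset.Icc 1 m).biUnion (fun j => J ∩ Q j) := by
      ext a
      simp only [Finset.mem_biUnion, Finset.mem_inter]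
      constructor
      · intro ha
        obtain ⟨j, hj, haq⟩ := hS a (hJS ha)
        exact ⟨j, hj, ha, haq⟩
      · rintro ⟨j, _, ha, _⟩; exact ha
    have hcardJ : (J.card : ℤ) = ∑ j ∈ Finset.Icc 1 m, ((J ∩ Q j).card : ℤ) := by
      conv_lhs => rw [hJeq]
      rw [Finset.card_biUnion (fun i hi j hj hij =>
        (hdisj i hi j hj hij).mono Finset.inter_subset_right Finset.inter_subset_right)]
      push_cast
      rfl
    apply Finset.le_inf'
    intro t ht
    simp only [Finset.mem_insert, Finset.mem_Icc] at ht
    have h1t : 1 ≤ t := by omega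
    have htm1 : t ≤ m + 1 := by omega
    have hsplit : (J.card : ℤ) = ∑ j ∈ Finset.Icc 1 (t-1), ((J ∩ Q j).card : ℤ)
        + ∑ j ∈ Finset.Icc t m, ((J ∩ Q j).card : ℤ) := by
      rw [hcardJ]
      have := Icc_split 1 (t-1) m (by omega) (by omega) (fun j => ((J ∩ Q j).card : ℤ))
      rwa [show t - 1 + 1 = t by omega] at this
    have hfirst : ∑ j ∈ Finset.Icc 1 (t-1), ((J ∩ Q j).card : ℤ)
        ≤ ∑ j ∈ Finset.Icc 1 (t-1), y j := by
      apply Finset.sum_le_sum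
      intro j _
      have h2 : (J ∩ Q j).card ≤ (S ∩ Q j).card :=
        Finset.card_le_card (Finset.inter_subset_inter hJS (Finset.Subset.refl (Q j)))
      simp only [hy_def]
      exact_mod_cast h2
    have hsecond : ∑ j ∈ Finset.Icc t m, ((J ∩ Q j).card : ℤ) ≤ ∑ s ∈ Finset.Icc t m, σ s := by
      by_cases htm : t ≤ m
      · exact hInd t (Finset.mem_Icc.mpr ⟨h1t, htm⟩)
      · have : Finset.Icc t m = ∅ := Finset.Icc_eq_empty (by omega)
        simp [this]
    simp only [Fg]
    linarith [hsplit, hfirst, hsecond]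
  -- conclude
  have hmem : I.card ∈ {c : ℕ | ∃ J : Finset α, J ⊆ S ∧ NIndep m Q σ J ∧ J.card = c} :=
    ⟨I, hIS, hIndep, rfl⟩
  have hbdd : BddAbove {c : ℕ | ∃ J : Finset α, J ⊆ S ∧ NIndep m Q σ J ∧ J.card = c} := by
    refine ⟨S.card, ?_⟩
    rintro c ⟨J, hJS, _, rfl⟩
    exact Finset.card_le_card hJS
  have heq : nrank (NIndep m Q σ) S = I.card := by
    apply le_antisymm
    · apply csSup_le ⟨I.card, hmem⟩
      rintro c ⟨J, hJS, hJind, rfl⟩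
      have h1 := hub J hJS hJind
      rw [← hIcard] at h1
      exact_mod_cast h1
    · exact le_csSup hbdd hmem
  rw [heq, hIcard]

/-- For every `S ⊆ U` with signature `x`,
`rk_{M_odd}(S) = Σ_i x_i − max(0, max_{odd a} ℓ_a(x))`. -/
theorem rank_Modd
    {α : Type*} [Fintype α] [DecidableEq α]
    (n g k : ℕ) (hk : 1 ≤ k) (hn : 0 < n) (hn2 : 2 ∣ n) (hg : 0 < g) (hg4 : 4 ∣ g)
    (hgrn : 5 * g * (2 * k + 1) ≤ n)
    (P : ℕ → Finset α)
    (hdisj : ∀ i ∈ Finset.Icc 1 (2 * k + 1), ∀ j ∈ Finset.Icc 1 (2 * k + 1),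
        i ≠ j → Disjoint (P i) (P j))
    (hcover : ∀ a : α, ∃ i ∈ Finset.Icc 1 (2 * k + 1), a ∈ P i)
    (hcard : ∀ i ∈ Finset.Icc 1 (2 * k + 1), (P i).card = n)
    (S : Finset α) :
    (nrank (NIndep (k + 1) (QoddF P k) (soddF n g k)) S : ℤ)
      = (∑ i ∈ Finset.Icc 1 (2 * k + 1), sigF P S i)
        - ((Finset.Icc 1 (2 * k + 1)).filter (fun t => Odd t)).fold max 0
            (ellT n g k (sigF P S)) := by
  classical
  have hdisjQ : ∀ i ∈ Finset.Icc 1 (k+1), ∀ j ∈ Finset.Icc 1 (k+1), i ≠ j →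
      Disjoint (QoddF P k i) (QoddF P k j) := by
    intro i hi j hj hij
    simp only [Finset.mem_Icc] at hi hj
    have hd : ∀ a b, 1 ≤ a → a ≤ 2*k+1 → 1 ≤ b → b ≤ 2*k+1 → a ≠ b → Disjoint (P a) (P b) := by
      intro a b h1 h2 h3 h4 h5
      exact hdisj a (Finset.mem_Icc.mpr ⟨h1, h2⟩) b (Finset.mem_Icc.mpr ⟨h3, h4⟩) h5
    simp only [QoddF]
    by_cases h1 : i ≤ k <;> by_cases h2 : j ≤ k
    · rw [if_pos h1, if_pos h2]
      refine Finset.disjoint_union_left.mpr ⟨Finset.disjoint_union_right.mpr ⟨?_, ?_⟩,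
        Finset.disjoint_union_right.mpr ⟨?_, ?_⟩⟩ <;> apply hd <;> omega
    · rw [if_pos h1, if_neg h2]
      refine Finset.disjoint_union_left.mpr ⟨?_, ?_⟩ <;> apply hd <;> omega
    · rw [if_neg h1, if_pos h2]
      refine Finset.disjoint_union_right.mpr ⟨?_, ?_⟩ <;> apply hd <;> omega
    · omega
  have h15 : (15:ℤ) * g ≤ n := by
    have h0 : 15 * g ≤ 5 * g * (2*k+1) := by nlinarith
    exact_mod_cast h0.trans hgrn
  have hσ : ∀ j ∈ Finset.Icc 1 (k+1), 0 ≤ soddF n g k j := by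
    intro j hj
    have hhalf : (0:ℤ) ≤ (n:ℤ)/2 - g := by omega
    simp only [soddF]
    by_cases h1 : j ≤ k
    · rw [if_pos h1]
      simp only [tauF]
      rw [if_neg (by omega : ¬(2*j-1 = 2*k+1)), if_neg (by omega : ¬(2*j = 2*k+1))]
      linarith
    · rw [if_neg h1]
      simp only [tauF, eq_self_iff_true, if_true]
      have h2 : (0:ℤ) ≤ ((g:ℤ) * (2*(k:ℤ)+1))/4 := Int.ediv_nonneg (by positivity) (by norm_num)
      linarith
  have hSc : ∀ a ∈ S, ∃ j ∈ Finset.Icc 1 (k+1), a ∈ QoddF P k j := by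
    intro a _
    obtain ⟨i, hi, hai⟩ := hcover a
    simp only [Finset.mem_Icc] at hi
    by_cases hik : i ≤ 2*k
    · refine ⟨(i+1)/2, Finset.mem_Icc.mpr ⟨by omega, by omega⟩, ?_⟩
      simp only [QoddF, if_pos (by omega : (i+1)/2 ≤ k)]
      have h : 2*((i+1)/2) - 1 = i ∨ 2*((i+1)/2) = i := by omega
      rcases h with h | h
      · apply Finset.mem_union_left; rw [h]; exact hai
      · apply Finset.mem_union_right; rw [h]; exact hai
    · refine ⟨k+1, Finset.mem_Icc.mpr ⟨by omega, le_refl _⟩, ?_⟩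
      simp only [QoddF, if_neg (by omega : ¬(k+1 ≤ k))]
      have h : i = 2*k+1 := by omega
      rw [← h]; exact hai
  have hyy : ∀ j ∈ Finset.Icc 1 k, ((S ∩ QoddF P k j).card : ℤ)
      = sigF P S (2*j-1) + sigF P S (2*j) := by
    intro j hj
    simp only [Finset.mem_Icc] at hj
    simp only [QoddF, if_pos hj.2]
    rw [Finset.inter_union_distrib_left, Finset.card_union_of_disjoint]
    · simp only [sigF]; push_cast; ring
    · exact (hdisj (2*j-1) (Finset.mem_Icc.mpr ⟨by omega, by omega⟩) (2*j)
        (Finset.mem_Icc.mpr ⟨by omega, by omega⟩) (by omega)).mono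
        Finset.inter_subset_right Finset.inter_subset_right
  have hyk : ((S ∩ QoddF P k (k+1)).card : ℤ) = sigF P S (2*k+1) := by
    simp only [QoddF, if_neg (by omega : ¬(k+1 ≤ k)), sigF]
  have hsum : ∑ j ∈ Finset.Icc 1 (k+1), ((S ∩ QoddF P k j).card : ℤ)
      = ∑ i ∈ Finset.Icc 1 (2*k+1), sigF P S i := by
    rw [Finset.sum_Icc_succ_top (by omega : 1 ≤ k+1), Finset.sum_congr rfl hyy, hyk,
      ← pairSum (sigF P S) k 1 (le_refl 1) (by omega),
      show (2*1-1 : ℕ) = 1 by norm_num,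
      show (2*k+1 : ℕ) = (2*k)+1 from rfl,
      Finset.sum_Icc_succ_top (by omega : 1 ≤ 2*k+1)]
  have hLt : ∀ t ∈ Finset.Icc 1 (k+1),
      (∑ s ∈ Finset.Icc t (k+1), (((S ∩ QoddF P k s).card : ℤ) - soddF n g k s))
        = ellT n g k (sigF P S) (2*t-1) := by
    intro t ht
    simp only [Finset.mem_Icc] at ht
    rw [Finset.sum_Icc_succ_top (by omega : t ≤ k+1)]
    have hstep : ∀ s ∈ Finset.Icc t k, ((S ∩ QoddF P k s).card : ℤ) - soddF n g k s
        = ((sigF P S (2*s-1) - tauF n g k (2*s-1)) + (sigF P S (2*s) - tauF n g k (2*s))) := by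
      intro s hs
      simp only [Finset.mem_Icc] at hs
      rw [hyy s (Finset.mem_Icc.mpr ⟨by omega, hs.2⟩)]
      simp only [soddF, if_pos hs.2]
      ring
    rw [Finset.sum_congr rfl hstep,
      ← pairSum (fun i => sigF P S i - tauF n g k i) k t (by omega) (by omega), hyk]
    simp only [soddF, if_neg (by omega : ¬(k+1 ≤ k))]
    unfold ellT
    rw [show (2*k+1 : ℕ) = (2*k)+1 from rfl,
      Finset.sum_Icc_succ_top (by omega : 2*t-1 ≤ 2*k+1)]
  have hmax : max 0 ((Finset.Icc 1 (k+1)).sup' (Finset.nonempty_Icc.mpr (by omega : 1 ≤ k+1))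
      (fun t => ∑ s ∈ Finset.Icc t (k+1), (((S ∩ QoddF P k s).card : ℤ) - soddF n g k s)))
      = ((Finset.Icc 1 (2*k+1)).filter (fun t => Odd t)).fold max 0 (ellT n g k (sigF P S)) := by
    apply le_antisymm
    · apply max_le
      · exact (Finset.le_fold_max _).mpr (Or.inl le_rfl)
      · obtain ⟨t, ht, hts⟩ := Finset.exists_mem_eq_sup'
          (Finset.nonempty_Icc.mpr (by omega : 1 ≤ k+1))
          (fun t => ∑ s ∈ Finset.Icc t (k+1), (((S ∩ QoddF P k s).card : ℤ) - soddF n g k s))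
        rw [hts, hLt t ht]
        apply (Finset.le_fold_max _).mpr
        right
        refine ⟨2*t-1, ?_, le_rfl⟩
        simp only [Finset.mem_filter, Finset.mem_Icc] at ht ⊢
        exact ⟨⟨by omega, by omega⟩, Nat.odd_iff.mpr (by omega)⟩
    · apply (Finset.fold_max_le _).mpr
      refine ⟨le_max_left _ _, ?_⟩
      intro a ha
      simp only [Finset.mem_filter, Finset.mem_Icc] at ha
      obtain ⟨⟨ha1, ha2⟩, hodd⟩ := ha
      have hodd' : a % 2 = 1 := Nat.odd_iff.mp hodd
      have hmem : (a+1)/2 ∈ Finset.Icc 1 (k+1) := Finset.mem_Icc.mpr ⟨by omega, by omega⟩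
      have h3 : ellT n g k (sigF P S) a
          = ∑ s ∈ Finset.Icc ((a+1)/2) (k+1), (((S ∩ QoddF P k s).card : ℤ) - soddF n g k s) := by
        rw [hLt _ hmem, show 2*((a+1)/2)-1 = a by omega]
      rw [h3]
      exact le_trans (Finset.le_sup' (fun t => ∑ s ∈ Finset.Icc t (k+1), (((S ∩ QoddF P k s).card : ℤ) - soddF n g k s)) hmem) (le_max_right _ _)
  rw [nested_rank (k+1) (QoddF P k) (soddF n g k) hdisjQ hσ S hSc,
    Wg_one (k+1) (by omega) (fun j => ((S ∩ QoddF P k j).card : ℤ)) (soddF n g k), hsum, hmax]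
end
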